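/- arXiv:1804.00106 — 10 statements merged into one kernel-verified Lean document; each statement's English description precedes it below -/
import Mathlib

section
/- (S-lemma, converse for m = 1) Let T₀ and T₁ be real symmetric n×n matrices. Suppose there exists ξ̄ ∈ ℝⁿ with ξ̄ᵀT₁ξ̄ < 0, and suppose that for every ξ ∈ ℝⁿ, ξᵀT₁ξ ≤ 0 implies ξᵀT₀ξ ≤ 0. Then there exists a scalar τ ≥ 0 such that T₀ − τT₁ is negative semidefinite. -/
open Matrix

private lemma slemma_expand (n : ℕ) (T : Matrix (Fin n) (Fin n) ℝ) (u x : Fin n → ℝ) (s : ℝ) :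
    (s • u + x) ⬝ᵥ (T *ᵥ (s • u + x)) =
      (u ⬝ᵥ (T *ᵥ u)) * s ^ 2 + (u ⬝ᵥ (T *ᵥ x) + x ⬝ᵥ (T *ᵥ u)) * s + x ⬝ᵥ (T *ᵥ x) := by
  simp [mulVec_add, mulVec_smul, dotProduct_add, add_dotProduct, smul_dotProduct,
    dotProduct_smul, smul_eq_mul]
  ring

private lemma slemma_key (a0 b0 c0 a1 b1 c1 : ℝ) (ha1 : 0 < a1) (hc1 : c1 < 0)
    (h : ∀ s : ℝ, a1 * s ^ 2 + b1 * s + c1 = 0 → a0 * s ^ 2 + b0 * s + c0 ≤ 0) :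
    c0 * a1 ≤ a0 * c1 := by
  set d := Real.sqrt (b1 ^ 2 - 4 * a1 * c1) with hdDef
  have hd2 : d ^ 2 = b1 ^ 2 - 4 * a1 * c1 := Real.sq_sqrt (by nlinarith)
  have hd0 : 0 ≤ d := Real.sqrt_nonneg _
  have hdb : |b1| < d := by
    have : b1 ^ 2 < d ^ 2 := by nlinarith
    nlinarith [abs_nonneg b1, sq_abs b1]
  have hb1 : b1 < d := lt_of_le_of_lt (le_abs_self b1) hdb
  have hb2 : -d < b1 := by
    have := neg_abs_le b1
    linarith
  set sp := (-b1 + d) / (2 * a1) with hspDef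
  set sm := (-b1 - d) / (2 * a1) with hsmDef
  have hsp : 0 < sp := by
    apply div_pos (by linarith) (by linarith)
  have hsm : sm < 0 := by
    apply div_neg_of_neg_of_pos (by linarith) (by linarith)
  have ha1' : (2 * a1) ≠ 0 := by positivity
  have hrootp : a1 * sp ^ 2 + b1 * sp + c1 = 0 := by
    rw [hspDef]; field_simp; nlinarith [hd2]
  have hrootm : a1 * sm ^ 2 + b1 * sm + c1 = 0 := by
    rw [hsmDef]; field_simp; nlinarith [hd2]
  have hprod : a1 * (sp * sm) = c1 := by
    rw [hspDef, hsmDef]; field_simp; nlinarith [hd2]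
  have hp := h sp hrootp
  have hm := h sm hrootm
  -- (-sm)·hp + sp·hm gives (sp - sm)(c0 - a0·sp·sm) ≤ 0
  have hcomb : (sp - sm) * (c0 - a0 * (sp * sm)) ≤ 0 := by nlinarith
  have hspsm : 0 < sp - sm := by linarith
  have : c0 ≤ a0 * (sp * sm) := by nlinarith
  have h2 : c0 * a1 ≤ a0 * (sp * sm) * a1 := mul_le_mul_of_nonneg_right this ha1.le
  have h3 : a0 * (sp * sm) * a1 = a0 * c1 := by linear_combination a0 * hprod
  linarith

/-- (S-lemma, converse for `m = 1`) If there is `ξ̄` with `ξ̄ᵀ T₁ ξ̄ < 0` (Slater condition)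
and `ξᵀ T₁ ξ ≤ 0 → ξᵀ T₀ ξ ≤ 0` for every `ξ`, then there is `τ ≥ 0` with
`T₀ - τ • T₁` negative semidefinite. -/
theorem s_lemma_converse (n : ℕ)
    (T0 T1 : Matrix (Fin n) (Fin n) ℝ)
    (hT0 : T0.IsSymm) (hT1 : T1.IsSymm)
    (hSlater : ∃ ξ : Fin n → ℝ, ξ ⬝ᵥ (T1 *ᵥ ξ) < 0)
    (himp : ∀ ξ : Fin n → ℝ, ξ ⬝ᵥ (T1 *ᵥ ξ) ≤ 0 → ξ ⬝ᵥ (T0 *ᵥ ξ) ≤ 0) :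
    ∃ τ : ℝ, 0 ≤ τ ∧ ∀ ξ : Fin n → ℝ, ξ ⬝ᵥ ((T0 - τ • T1) *ᵥ ξ) ≤ 0 := by
  obtain ⟨y, hy⟩ := hSlater
  set q0 : (Fin n → ℝ) → ℝ := fun x => x ⬝ᵥ (T0 *ᵥ x) with hq0
  set q1 : (Fin n → ℝ) → ℝ := fun x => x ⬝ᵥ (T1 *ᵥ x) with hq1
  have hrw : ∀ (τ : ℝ) (x : Fin n → ℝ),
      x ⬝ᵥ ((T0 - τ • T1) *ᵥ x) = q0 x - τ * q1 x := by
    intro τ x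
    simp [hq0, hq1, sub_mulVec, smul_mulVec, dotProduct_sub, dotProduct_smul,
      smul_eq_mul]
  have hkey : ∀ u x : Fin n → ℝ, 0 < q1 u → q1 x < 0 →
      q0 u / q1 u ≤ q0 x / q1 x := by
    intro u x hu hx
    have hk : q0 x * q1 u ≤ q0 u * q1 x := by
      apply slemma_key (q0 u) (u ⬝ᵥ (T0 *ᵥ x) + x ⬝ᵥ (T0 *ᵥ u)) (q0 x)
        (q1 u) (u ⬝ᵥ (T1 *ᵥ x) + x ⬝ᵥ (T1 *ᵥ u)) (q1 x) hu hx
      intro s hs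
      have h1 : (s • u + x) ⬝ᵥ (T1 *ᵥ (s • u + x)) ≤ 0 := by
        rw [slemma_expand]
        simp only [hq1] at hs
        linarith
      have h0 := himp _ h1
      rw [slemma_expand] at h0
      simp only [hq0]
      linarith
    have hx' : 0 < -(q1 x) := by linarith
    have hrwn : q0 x / q1 x = (-(q0 x)) / (-(q1 x)) := (neg_div_neg_eq _ _).symm
    rw [hrwn, div_le_div_iff₀ hu hx']
    nlinarith
  by_cases hpos : ∃ u : Fin n → ℝ, 0 < q1 u
  · obtain ⟨u0, hu0⟩ := hpos
    set S : Set ℝ := {r | ∃ u : Fin n → ℝ, 0 < q1 u ∧ q0 u / q1 u = r} with hS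
    have hne : S.Nonempty := ⟨q0 u0 / q1 u0, u0, hu0, rfl⟩
    have hbdd : BddAbove S := by
      refine ⟨q0 y / q1 y, ?_⟩
      rintro r ⟨u, hu, rfl⟩
      exact hkey u y hu hy
    refine ⟨max (sSup S) 0, le_max_right _ _, ?_⟩
    intro x
    rw [hrw]
    rcases lt_trichotomy (q1 x) 0 with hx | hx | hx
    · have h0 : q0 x ≤ 0 := himp x (le_of_lt hx)
      have hdiv0 : 0 ≤ q0 x / q1 x := by
        rw [(neg_div_neg_eq (q0 x) (q1 x)).symm]
        exact div_nonneg (by linarith) (by linarith)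
      have hsup : sSup S ≤ q0 x / q1 x := by
        apply csSup_le hne
        rintro r ⟨u, hu, rfl⟩
        exact hkey u x hu hx
      have hmax : max (sSup S) 0 ≤ q0 x / q1 x := max_le hsup hdiv0
      have := (le_div_iff_of_neg hx).mp hmax
      linarith
    · have h0 : q0 x ≤ 0 := himp x (le_of_eq hx)
      rw [hx]
      linarith
    · have hmem : q0 x / q1 x ∈ S := ⟨x, hx, rfl⟩
      have hle : q0 x / q1 x ≤ max (sSup S) 0 :=
        le_trans (le_csSup hbdd hmem) (le_max_left _ _)
      have := (div_le_iff₀ hx).mp hle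
      linarith
  · push_neg at hpos
    refine ⟨0, le_refl 0, ?_⟩
    intro x
    rw [hrw]
    have h0 : q0 x ≤ 0 := himp x (hpos x)
    linarith
end

section
/- (Equivalence of the S-procedure LMI and the SDP-relaxation LMI) Let x₀ ∈ ℝⁿ, let P₀ be a symmetric positive definite n×n matrix, set x̃₀ = P₀⁻¹x₀, define A₀ from (x₀, P₀) in the same way as the Aᵢ, and let λ₁, …, λₘ ≥ 0. Then A₀ − Σ_{i=1}^m λᵢAᵢ is negative semidefinite if and only if the (2n+1)×(2n+1) block matrix K(P₀, x̃₀, λ) is negative semidefinite. -/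
/-!
Write `M = A₀ - ∑ λᵢ Aᵢ` and `Q = P₀⁻¹`. Both `M` and the top-left `(n+1) × (n+1)` corner of `K` are
bordered matrices `[[A, b], [bᵀ, c]]` with the same `A` and `b`; the corner entries differ by
`x₀ᵀQx₀`. Since `x̃₀ = Qx₀`, the remaining blocks of `K` complete a square: for `ζ = (u, t, v)`,
`ζᵀKζ = (u, t)ᵀ M (u, t) - (v - t x₀)ᵀ Q (v - t x₀)`.
Since `Q ⪰ 0` the correction term is nonpositive, and it vanishes at `v = t x₀`; these give the two
implications.
-/

open Matrix

/-- The symmetric `(n+1) × (n+1)` block matrix associated to the ellipsoid with center `c`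
and positive definite shape matrix `P`:
`A = [[P⁻¹, -P⁻¹c], [-cᵀP⁻¹, cᵀP⁻¹c - 1]]`. -/
noncomputable def ellipsoidBlock {n : ℕ} (c : Fin n → ℝ) (P : Matrix (Fin n) (Fin n) ℝ) :
    Matrix (Fin n ⊕ Unit) (Fin n ⊕ Unit) ℝ :=
  Matrix.fromBlocks P⁻¹ (Matrix.replicateCol Unit (-(P⁻¹ *ᵥ c)))
    (Matrix.replicateRow Unit (-(P⁻¹ *ᵥ c))) (Matrix.of fun _ _ => c ⬝ᵥ (P⁻¹ *ᵥ c) - 1)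

/-- The symmetric `(2n+1) × (2n+1)` block matrix `K(P₀, x̃₀, λ)` of the SDP relaxation:
`[[P₀⁻¹ - Σᵢ λᵢ Pᵢ⁻¹, -x̃₀ + Σᵢ λᵢ Pᵢ⁻¹xᵢ, 0],
  [(-x̃₀ + Σᵢ λᵢ Pᵢ⁻¹xᵢ)ᵀ, -1 - Σᵢ λᵢ(xᵢᵀPᵢ⁻¹xᵢ - 1), x̃₀ᵀ],
  [0, x̃₀, -P₀⁻¹]]`. -/
noncomputable def sdpBlockK {n m : ℕ} (x : Fin m → (Fin n → ℝ))
    (P : Fin m → Matrix (Fin n) (Fin n) ℝ)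
    (P₀ : Matrix (Fin n) (Fin n) ℝ) (xt : Fin n → ℝ) (lam : Fin m → ℝ) :
    Matrix (Fin n ⊕ (Unit ⊕ Fin n)) (Fin n ⊕ (Unit ⊕ Fin n)) ℝ :=
  Matrix.fromBlocks
    (P₀⁻¹ - ∑ i, lam i • (P i)⁻¹)
    (Matrix.fromCols (Matrix.replicateCol Unit (-xt + ∑ i, lam i • ((P i)⁻¹ *ᵥ x i))) 0)
    (Matrix.fromRows (Matrix.replicateRow Unit (-xt + ∑ i, lam i • ((P i)⁻¹ *ᵥ x i))) 0)
    (Matrix.fromBlocks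
      (Matrix.of fun _ _ => -1 - ∑ i, lam i * (x i ⬝ᵥ ((P i)⁻¹ *ᵥ x i) - 1))
      (Matrix.replicateRow Unit xt) (Matrix.replicateCol Unit xt) (-P₀⁻¹))

namespace Matrix

variable {R ι κ : Type*}

def bordered (A : Matrix ι ι R) (b : ι → R) (c : R) : Matrix (ι ⊕ Unit) (ι ⊕ Unit) R :=
  fromBlocks A (replicateCol Unit b) (replicateRow Unit b) (of fun _ _ => c)

theorem bordered_sub [Sub R] (A A' : Matrix ι ι R) (b b' : ι → R) (c c' : R) :
    bordered A b c - bordered A' b' c' = bordered (A - A') (b - b') (c - c') := by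
  ext (i | i) (j | j) <;> simp [bordered]

theorem smul_bordered [Mul R] (r : R) (A : Matrix ι ι R) (b : ι → R) (c : R) :
    r • bordered A b c = bordered (r • A) (r • b) (r * c) := by
  ext (i | i) (j | j) <;> simp [bordered]

theorem sum_bordered [AddCommMonoid R] {α : Type*} (s : Finset α) (A : α → Matrix ι ι R)
    (b : α → ι → R) (c : α → R) :
    ∑ a ∈ s, bordered (A a) (b a) (c a) =
      bordered (∑ a ∈ s, A a) (∑ a ∈ s, b a) (∑ a ∈ s, c a) := by
  ext (i | i) (j | j) <;> simp [bordered, Matrix.sum_apply]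

variable [CommRing R] [Fintype ι] [Fintype κ]

theorem sumElim_dotProduct_fromBlocks_mulVec_sumElim (A : Matrix ι ι R) (B : Matrix ι κ R)
    (C : Matrix κ ι R) (D : Matrix κ κ R) (u : ι → R) (v : κ → R) :
    Sum.elim u v ⬝ᵥ (fromBlocks A B C D *ᵥ Sum.elim u v) =
      u ⬝ᵥ (A *ᵥ u) + u ⬝ᵥ (B *ᵥ v) + v ⬝ᵥ (C *ᵥ u) + v ⬝ᵥ (D *ᵥ v) := by
  rw [fromBlocks_mulVec, sumElim_dotProduct_sumElim, dotProduct_add, dotProduct_add,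
    Sum.elim_comp_inl, Sum.elim_comp_inr]
  abel

theorem dotProduct_replicateCol_mulVec_const (b u : ι → R) (t : R) :
    u ⬝ᵥ (replicateCol Unit b *ᵥ fun _ => t) = t * (b ⬝ᵥ u) := by
  simp [mulVec, dotProduct, Finset.mul_sum, mul_comm, mul_left_comm]

theorem const_dotProduct_replicateRow_mulVec (b u : ι → R) (t : R) :
    (fun _ : Unit => t) ⬝ᵥ (replicateRow Unit b *ᵥ u) = t * (b ⬝ᵥ u) := by
  simp [replicateRow_mulVec_eq_const, dotProduct]

theorem const_dotProduct_of_const_mulVec_const (c t : R) :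
    (fun _ : Unit => t) ⬝ᵥ ((of fun _ _ => c : Matrix Unit Unit R) *ᵥ fun _ => t) = c * t ^ 2 := by
  simp [mulVec, dotProduct]
  ring

theorem sumElim_dotProduct_bordered_mulVec_sumElim (A : Matrix ι ι R) (b : ι → R) (c : R)
    (u : ι → R) (t : R) :
    Sum.elim u (fun _ => t) ⬝ᵥ (bordered A b c *ᵥ Sum.elim u fun _ => t) =
      u ⬝ᵥ (A *ᵥ u) + 2 * t * (b ⬝ᵥ u) + c * t ^ 2 := by
  rw [bordered, sumElim_dotProduct_fromBlocks_mulVec_sumElim,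
    dotProduct_replicateCol_mulVec_const, const_dotProduct_replicateRow_mulVec,
    const_dotProduct_of_const_mulVec_const]
  ring

theorem sumElim_dotProduct_fromBlocks_bordered_mulVec_sumElim (A : Matrix ι ι R) (b : ι → R)
    (c : R) (w : κ → R) (Q : Matrix κ κ R) (u : ι → R) (t : R) (v : κ → R) :
    Sum.elim u (Sum.elim (fun _ => t) v) ⬝ᵥ
        (fromBlocks A (fromCols (replicateCol Unit b) 0) (fromRows (replicateRow Unit b) 0)
            (fromBlocks (of fun _ _ => c) (replicateRow Unit w) (replicateCol Unit w) Q) *ᵥ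
          Sum.elim u (Sum.elim (fun _ => t) v)) =
      Sum.elim u (fun _ => t) ⬝ᵥ (bordered A b c *ᵥ Sum.elim u fun _ => t) + 2 * t * (w ⬝ᵥ v)
        + v ⬝ᵥ (Q *ᵥ v) := by
  rw [sumElim_dotProduct_bordered_mulVec_sumElim, sumElim_dotProduct_fromBlocks_mulVec_sumElim,
    sumElim_dotProduct_fromBlocks_mulVec_sumElim, fromCols_mulVec_sumElim, fromRows_mulVec,
    sumElim_dotProduct_sumElim]
  simp only [zero_mulVec, dotProduct_zero, add_zero, dotProduct_replicateCol_mulVec_const,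
    const_dotProduct_replicateRow_mulVec, const_dotProduct_of_const_mulVec_const]
  ring

theorem IsSymm.dotProduct_sub_smul_mulVec_sub_smul {Q : Matrix ι ι R} (hQ : Q.IsSymm)
    (v w : ι → R) (t : R) :
    (v - t • w) ⬝ᵥ (Q *ᵥ (v - t • w)) =
      v ⬝ᵥ (Q *ᵥ v) - 2 * t * ((Q *ᵥ w) ⬝ᵥ v) + t ^ 2 * (w ⬝ᵥ (Q *ᵥ w)) := by
  have hswap : w ⬝ᵥ (Q *ᵥ v) = (Q *ᵥ w) ⬝ᵥ v := by
    rw [dotProduct_mulVec, ← vecMul_transpose, hQ.eq, dotProduct_comm]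
  simp only [mulVec_sub, mulVec_smul, dotProduct_sub, sub_dotProduct, dotProduct_smul,
    smul_dotProduct, smul_eq_mul, hswap, dotProduct_comm v (Q *ᵥ w)]
  ring

end Matrix

theorem ellipsoidBlock_eq_bordered {n : ℕ} (c : Fin n → ℝ) (P : Matrix (Fin n) (Fin n) ℝ) :
    ellipsoidBlock c P = bordered P⁻¹ (-(P⁻¹ *ᵥ c)) (c ⬝ᵥ (P⁻¹ *ᵥ c) - 1) :=
  rfl

theorem ellipsoidBlock_sub_sum_smul {n m : ℕ} (x : Fin m → Fin n → ℝ)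
    (P : Fin m → Matrix (Fin n) (Fin n) ℝ) (x₀ : Fin n → ℝ) (P₀ : Matrix (Fin n) (Fin n) ℝ)
    (lam : Fin m → ℝ) :
    ellipsoidBlock x₀ P₀ - ∑ i, lam i • ellipsoidBlock (x i) (P i) =
      bordered (P₀⁻¹ - ∑ i, lam i • (P i)⁻¹) (-(P₀⁻¹ *ᵥ x₀) + ∑ i, lam i • ((P i)⁻¹ *ᵥ x i))
        (x₀ ⬝ᵥ (P₀⁻¹ *ᵥ x₀) - 1 - ∑ i, lam i * (x i ⬝ᵥ ((P i)⁻¹ *ᵥ x i) - 1)) := by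
  simp only [ellipsoidBlock_eq_bordered, smul_bordered, sum_bordered, bordered_sub, smul_neg,
    Finset.sum_neg_distrib, sub_neg_eq_add]

theorem sumElim_dotProduct_sdpBlockK_mulVec_sumElim {n m : ℕ} (x : Fin m → Fin n → ℝ)
    (P : Fin m → Matrix (Fin n) (Fin n) ℝ) (x₀ : Fin n → ℝ) {P₀ : Matrix (Fin n) (Fin n) ℝ}
    (hsymm : P₀⁻¹.IsSymm) (lam : Fin m → ℝ) (u : Fin n → ℝ) (t : ℝ) (v : Fin n → ℝ) :
    Sum.elim u (Sum.elim (fun _ => t) v) ⬝ᵥ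
        (sdpBlockK x P P₀ (P₀⁻¹ *ᵥ x₀) lam *ᵥ Sum.elim u (Sum.elim (fun _ => t) v)) =
      Sum.elim u (fun _ => t) ⬝ᵥ ((ellipsoidBlock x₀ P₀ - ∑ i, lam i • ellipsoidBlock (x i) (P i))
          *ᵥ Sum.elim u fun _ => t)
        - (v - t • x₀) ⬝ᵥ (P₀⁻¹ *ᵥ (v - t • x₀)) := by
  rw [sdpBlockK, sumElim_dotProduct_fromBlocks_bordered_mulVec_sumElim,
    ellipsoidBlock_sub_sum_smul, sumElim_dotProduct_bordered_mulVec_sumElim,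
    sumElim_dotProduct_bordered_mulVec_sumElim, neg_mulVec, dotProduct_neg,
    hsymm.dotProduct_sub_smul_mulVec_sub_smul]
  ring

theorem s_procedure_LMI_iff_sdp_LMI_general (n m : ℕ)
    (x : Fin m → (Fin n → ℝ)) (P : Fin m → Matrix (Fin n) (Fin n) ℝ)
    (x₀ : Fin n → ℝ) (P₀ : Matrix (Fin n) (Fin n) ℝ) (hP₀ : P₀.PosDef)
    (xt : Fin n → ℝ) (hxt : xt = P₀⁻¹ *ᵥ x₀)
    (lam : Fin m → ℝ) :
    (∀ ξ : (Fin n ⊕ Unit) → ℝ,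
        ξ ⬝ᵥ ((ellipsoidBlock x₀ P₀ - ∑ i, lam i • ellipsoidBlock (x i) (P i)) *ᵥ ξ) ≤ 0) ↔
      (∀ ζ : (Fin n ⊕ (Unit ⊕ Fin n)) → ℝ,
        ζ ⬝ᵥ (sdpBlockK x P P₀ xt lam *ᵥ ζ) ≤ 0) := by
  subst hxt
  have hsymm : P₀⁻¹.IsSymm := by
    simpa [IsHermitian, IsSymm] using hP₀.inv.isHermitian
  have hnonneg (y : Fin n → ℝ) : 0 ≤ y ⬝ᵥ (P₀⁻¹ *ᵥ y) := by
    simpa using hP₀.inv.posSemidef.dotProduct_mulVec_nonneg y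
  constructor
  · intro hM ζ
    obtain ⟨u, t, v, rfl⟩ : ∃ u t v, ζ = Sum.elim u (Sum.elim (fun _ => t) v) :=
      ⟨ζ ∘ Sum.inl, ζ (Sum.inr (Sum.inl ())), ζ ∘ Sum.inr ∘ Sum.inr, by
        ext (_ | _ | _) <;> rfl⟩
    rw [sumElim_dotProduct_sdpBlockK_mulVec_sumElim x P x₀ hsymm]
    linarith [hM (Sum.elim u fun _ => t), hnonneg (v - t • x₀)]
  · intro hK ξ
    obtain ⟨u, t, rfl⟩ : ∃ u t, ξ = Sum.elim u fun _ => t :=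
      ⟨ξ ∘ Sum.inl, ξ (Sum.inr ()), by ext (_ | _) <;> rfl⟩
    simpa [sumElim_dotProduct_sdpBlockK_mulVec_sumElim x P x₀ hsymm] using
      hK (Sum.elim u (Sum.elim (fun _ => t) (t • x₀)))

/-- (Equivalence of the S-procedure LMI and the SDP-relaxation LMI) With `x̃₀ = P₀⁻¹x₀`,
the matrix `A₀ - ∑ i, λ i • A i` is negative semidefinite if and only if the block matrix
`K(P₀, x̃₀, λ)` is negative semidefinite. -/
theorem s_procedure_LMI_iff_sdp_LMI (n m : ℕ) (hn : 0 < n) (hm : 0 < m)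
    (x : Fin m → (Fin n → ℝ)) (P : Fin m → Matrix (Fin n) (Fin n) ℝ)
    (hP : ∀ i, (P i).PosDef)
    (x₀ : Fin n → ℝ) (P₀ : Matrix (Fin n) (Fin n) ℝ) (hP₀ : P₀.PosDef)
    (xt : Fin n → ℝ) (hxt : xt = P₀⁻¹ *ᵥ x₀)
    (lam : Fin m → ℝ) (hlam : ∀ i, 0 ≤ lam i) :
    (∀ ξ : (Fin n ⊕ Unit) → ℝ,
        ξ ⬝ᵥ ((ellipsoidBlock x₀ P₀ - ∑ i, lam i • ellipsoidBlock (x i) (P i)) *ᵥ ξ) ≤ 0) ↔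
      (∀ ζ : (Fin n ⊕ (Unit ⊕ Fin n)) → ℝ,
        ζ ⬝ᵥ (sdpBlockK x P P₀ xt lam *ᵥ ζ) ≤ 0) :=
  s_procedure_LMI_iff_sdp_LMI_general n m x P x₀ P₀ hP₀ xt hxt lam
end

section
/- (Decoupled SDP relaxation implies the coupled LMI) Let λ₁, …, λₘ ≥ 0 with Σ_{i=1}^m λᵢ > 0, and suppose the (n+1)×(n+1) block matrix M(λ) is positive semidefinite. Define P₀ = (Σ_{i=1}^m λᵢPᵢ⁻¹)⁻¹ (which exists since Σᵢ λᵢPᵢ⁻¹ is positive definite) and x̃₀ = Σ_{i=1}^m λᵢPᵢ⁻¹xᵢ. Then the (n+1)×(n+1) block matrix N(P₀, x̃₀, λ) is positive semidefinite. -/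
open Matrix

/-- The symmetric `(n+1) × (n+1)` block matrix `M(λ)` of the decoupled SDP relaxation:
`[[1 - Σᵢλᵢ + ΣᵢλᵢxᵢᵀPᵢ⁻¹xᵢ, (ΣᵢλᵢPᵢ⁻¹xᵢ)ᵀ], [ΣᵢλᵢPᵢ⁻¹xᵢ, ΣᵢλᵢPᵢ⁻¹]]`. -/
noncomputable def decoupledBlockM {n m : ℕ} (x : Fin m → (Fin n → ℝ))
    (P : Fin m → Matrix (Fin n) (Fin n) ℝ) (lam : Fin m → ℝ) :
    Matrix (Unit ⊕ Fin n) (Unit ⊕ Fin n) ℝ :=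
  Matrix.fromBlocks
    (Matrix.of fun _ _ => 1 - (∑ i, lam i) + ∑ i, lam i * (x i ⬝ᵥ ((P i)⁻¹ *ᵥ x i)))
    (Matrix.replicateRow Unit (∑ i, lam i • ((P i)⁻¹ *ᵥ x i)))
    (Matrix.replicateCol Unit (∑ i, lam i • ((P i)⁻¹ *ᵥ x i)))
    (∑ i, lam i • (P i)⁻¹)

/-- The symmetric `(n+1) × (n+1)` block matrix `N(P₀, x̃₀, λ)`:
`[[Σᵢ λᵢ Pᵢ⁻¹ - P₀⁻¹, x̃₀ - Σᵢ λᵢ Pᵢ⁻¹xᵢ],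
  [(x̃₀ - Σᵢ λᵢ Pᵢ⁻¹xᵢ)ᵀ, 1 + Σᵢ λᵢ(xᵢᵀPᵢ⁻¹xᵢ - 1) - x̃₀ᵀP₀x̃₀]]`. -/
noncomputable def sdpBlockN {n m : ℕ} (x : Fin m → (Fin n → ℝ))
    (P : Fin m → Matrix (Fin n) (Fin n) ℝ)
    (P₀ : Matrix (Fin n) (Fin n) ℝ) (xt : Fin n → ℝ) (lam : Fin m → ℝ) :
    Matrix (Fin n ⊕ Unit) (Fin n ⊕ Unit) ℝ :=
  Matrix.fromBlocks
    ((∑ i, lam i • (P i)⁻¹) - P₀⁻¹)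
    (Matrix.replicateCol Unit (xt - ∑ i, lam i • ((P i)⁻¹ *ᵥ x i)))
    (Matrix.replicateRow Unit (xt - ∑ i, lam i • ((P i)⁻¹ *ᵥ x i)))
    (Matrix.of fun _ _ =>
      1 + (∑ i, lam i * (x i ⬝ᵥ ((P i)⁻¹ *ᵥ x i) - 1)) - xt ⬝ᵥ (P₀ *ᵥ xt))

/-!
Put `A = Σᵢ λᵢPᵢ⁻¹`, positive definite as a nonnegative combination of positive definite matrices
with positive total weight. With `P₀ = A⁻¹` and `x̃₀ = Σᵢ λᵢPᵢ⁻¹xᵢ` every block of `N` except its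
scalar corner vanishes, and that corner is the Schur complement of the block `A`
in `M(λ)`, which is nonnegative because `M(λ)` is positive semidefinite.
-/

namespace Matrix

variable {n : Type*}

theorem posDef_sum_smul {ι R : Type*} [Fintype ι] [CommRing R] [LinearOrder R]
    [IsStrictOrderedRing R] [StarRing R] [StarOrderedRing R] {A : ι → Matrix n n R}
    (hA : ∀ i, (A i).PosDef) {w : ι → R} (hw : ∀ i, 0 ≤ w i) (hsum : 0 < ∑ i, w i) :
    (∑ i, w i • A i).PosDef := by
  classical
  obtain ⟨j, -, hj⟩ := Finset.exists_lt_of_sum_lt (by simpa using hsum : ∑ _ : ι, (0 : R) < _)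
  rw [← Finset.sum_filter_of_ne (p := fun i => 0 < w i)
    fun i _ hi => (hw i).lt_of_ne' (left_ne_zero_of_smul hi)]
  exact posDef_sum ⟨j, by simpa using hj⟩ fun i hi => (hA i).smul (Finset.mem_filter.mp hi).2

variable [DecidableEq n]

theorem sub_dotProduct_inv_mulVec_nonneg_of_posSemidef_fromBlocks [Fintype n] {c : ℝ}
    {u : n → ℝ} {A : Matrix n n ℝ} (hA : A.PosDef)
    (h : (fromBlocks (of fun _ _ => c) (replicateRow Unit u) (replicateCol Unit u) A).PosSemidef) :
    0 ≤ c - u ⬝ᵥ A⁻¹ *ᵥ u := by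
  have := hA.isUnit.invertible
  rw [show replicateCol Unit u = (replicateRow Unit u)ᴴ by simp,
    PosDef.fromBlocks₂₂ _ _ hA] at h
  rw [dotProduct_mulVec]
  simpa [mul_apply, replicateRow, vecMul, dotProduct]
    using h.diag_nonneg (i := ())

theorem posSemidef_fromBlocks_zero_scalar {c : ℝ} (hc : 0 ≤ c) :
    (fromBlocks (0 : Matrix n n ℝ) 0 0 (of fun _ _ => c : Matrix Unit Unit ℝ)).PosSemidef := by
  have : (of fun _ _ => c : Matrix Unit Unit ℝ) = diagonal fun _ => c := by
    ext ⟨⟩ ⟨⟩; rfl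
  rw [this, ← diagonal_zero, fromBlocks_diagonal, posSemidef_diagonal_iff]
  rintro (i | i) <;> simp [hc]

end Matrix

theorem decoupled_implies_coupled_general (n m : ℕ)
    (x : Fin m → (Fin n → ℝ)) (P : Fin m → Matrix (Fin n) (Fin n) ℝ)
    (hP : ∀ i, (P i).PosDef)
    (lam : Fin m → ℝ) (hlam : ∀ i, 0 ≤ lam i) (hlampos : 0 < ∑ i, lam i)
    (hM : (decoupledBlockM x P lam).PosSemidef)
    (P₀ : Matrix (Fin n) (Fin n) ℝ) (hP₀ : P₀ = (∑ i, lam i • (P i)⁻¹)⁻¹)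
    (xt : Fin n → ℝ) (hxt : xt = ∑ i, lam i • ((P i)⁻¹ *ᵥ x i)) :
    (sdpBlockN x P P₀ xt lam).PosSemidef := by
  have hA : (∑ i, lam i • (P i)⁻¹).PosDef := posDef_sum_smul (fun i => (hP i).inv) hlam hlampos
  have hP₀inv : P₀⁻¹ = ∑ i, lam i • (P i)⁻¹ := by
    rw [hP₀, nonsing_inv_nonsing_inv _ hA.det_pos.ne'.isUnit]
  have hschur := sub_dotProduct_inv_mulVec_nonneg_of_posSemidef_fromBlocks hA
    (by simpa only [decoupledBlockM, ← hxt] using hM)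
  have hcorner : 1 + ∑ i, lam i * (x i ⬝ᵥ (P i)⁻¹ *ᵥ x i - 1)
      = 1 - ∑ i, lam i + ∑ i, lam i * (x i ⬝ᵥ (P i)⁻¹ *ᵥ x i) := by
    simp only [mul_sub, mul_one, Finset.sum_sub_distrib]
    ring
  rw [sdpBlockN, hP₀inv, ← hxt, sub_self, sub_self, replicateCol_zero, replicateRow_zero,
    hcorner, hP₀]
  exact posSemidef_fromBlocks_zero_scalar hschur

/-- (Decoupled SDP relaxation implies the coupled LMI) If `M(λ)` is positive semidefinite and
we set `P₀ = (Σᵢ λᵢPᵢ⁻¹)⁻¹` and `x̃₀ = Σᵢ λᵢPᵢ⁻¹xᵢ`, then `N(P₀, x̃₀, λ)` is positive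
semidefinite. -/
theorem decoupled_implies_coupled (n m : ℕ) (hn : 0 < n) (hm : 0 < m)
    (x : Fin m → (Fin n → ℝ)) (P : Fin m → Matrix (Fin n) (Fin n) ℝ)
    (hP : ∀ i, (P i).PosDef)
    (lam : Fin m → ℝ) (hlam : ∀ i, 0 ≤ lam i) (hlampos : 0 < ∑ i, lam i)
    (hM : (decoupledBlockM x P lam).PosSemidef)
    (P₀ : Matrix (Fin n) (Fin n) ℝ) (hP₀ : P₀ = (∑ i, lam i • (P i)⁻¹)⁻¹)
    (xt : Fin n → ℝ) (hxt : xt = ∑ i, lam i • ((P i)⁻¹ *ᵥ x i)) :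
    (sdpBlockN x P P₀ xt lam).PosSemidef :=
  decoupled_implies_coupled_general n m x P hP lam hlam hlampos hM P₀ hP₀ xt hxt
end

section
/- (Coupled LMI implies the decoupled SDP relaxation) Let λ₁, …, λₘ ≥ 0 with Σ_{i=1}^m λᵢ > 0, and suppose there exist a symmetric positive definite n×n matrix P₀ and a vector x̃₀ ∈ ℝⁿ such that the (n+1)×(n+1) block matrix N(P₀, x̃₀, λ) is positive semidefinite. Then the (n+1)×(n+1) block matrix M(λ) is positive semidefinite. -/
open Matrix

/-!
`M(λ)` is obtained from `N(P₀, x̃₀, λ)` by exchanging the two diagonal blocks and negating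
the off-diagonal ones (a congruence by `diag(-1, 1)` followed by a permutation), then adding
`[[x̃₀ᵀP₀x̃₀, x̃₀ᵀ], [x̃₀, P₀⁻¹]]`. The last matrix is positive semidefinite because its
Schur complement with respect to `P₀⁻¹` vanishes, and sums of positive semidefinite
matrices are positive semidefinite.
-/

namespace Matrix

variable {m n R : Type*}

theorem PosSemidef.fromBlocks_neg_offDiag [Fintype m] [Fintype n] [DecidableEq m] [DecidableEq n]
    [Ring R] [PartialOrder R] [StarRing R]
    {A : Matrix m m R} {B : Matrix m n R} {C : Matrix n m R} {D : Matrix n n R}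
    (h : (fromBlocks A B C D).PosSemidef) : (fromBlocks A (-B) (-C) D).PosSemidef := by
  have := h.conjTranspose_mul_mul_same (fromBlocks (1 : Matrix m m R) 0 0 (-1 : Matrix n n R))
  simpa [fromBlocks_conjTranspose, fromBlocks_multiply] using this

theorem PosSemidef.fromBlocks_swap [Ring R] [PartialOrder R] [StarRing R]
    {A : Matrix m m R} {B : Matrix m n R} {C : Matrix n m R} {D : Matrix n n R}
    (h : (fromBlocks A B C D).PosSemidef) : (fromBlocks D C B A).PosSemidef := by
  simpa using h.submatrix Sum.swap

theorem PosDef.posSemidef_fromBlocks_inv {K : Type*} [Field K] [PartialOrder K] [StarRing K]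
    [StarOrderedRing K] [Fintype n] [DecidableEq n] {P : Matrix n n K} (hP : P.PosDef)
    (v : n → K) :
    (fromBlocks (of fun _ _ => star v ⬝ᵥ (P *ᵥ v)) (replicateRow Unit (star v))
      (replicateCol Unit v) P⁻¹).PosSemidef := by
  have : Invertible P⁻¹ := hP.inv.isUnit.invertible
  have hP_inv_inv : P⁻¹⁻¹ = P :=
    nonsing_inv_nonsing_inv P ((isUnit_iff_isUnit_det P).mp hP.isUnit)
  have hSchur :=
    hP.inv.fromBlocks₂₂ (of fun _ _ => star v ⬝ᵥ (P *ᵥ v)) (replicateRow Unit (star v))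
  rw [conjTranspose_replicateRow, star_star] at hSchur
  rw [hSchur, hP_inv_inv, Matrix.mul_assoc, ← replicateCol_mulVec, replicateRow_mul_replicateCol,
    sub_self]
  exact .zero

end Matrix

theorem coupled_implies_decoupled_general (n m : ℕ)
    (x : Fin m → (Fin n → ℝ)) (P : Fin m → Matrix (Fin n) (Fin n) ℝ)
    (lam : Fin m → ℝ)
    (hex : ∃ (P₀ : Matrix (Fin n) (Fin n) ℝ) (xt : Fin n → ℝ),
      P₀.PosDef ∧ (sdpBlockN x P P₀ xt lam).PosSemidef) :
    (decoupledBlockM x P lam).PosSemidef := by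
  obtain ⟨P₀, xt, hP₀, hN⟩ := hex
  have hK := hP₀.posSemidef_fromBlocks_inv xt
  simp only [star_trivial] at hK
  rw [sdpBlockN] at hN
  convert hN.fromBlocks_neg_offDiag.fromBlocks_swap.add hK using 1
  rw [decoupledBlockM, fromBlocks_add]
  congr 1
  · ext
    simp only [of_apply, Matrix.add_apply, mul_sub, mul_one, Finset.sum_sub_distrib, sub_add_cancel]
    ring
  · ext; simp
  · ext; simp
  · simp

/-- (Coupled LMI implies the decoupled SDP relaxation) If there exist a symmetric positive
definite `P₀` and a vector `x̃₀` with `N(P₀, x̃₀, λ)` positive semidefinite, then `M(λ)` is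
positive semidefinite. -/
theorem coupled_implies_decoupled (n m : ℕ) (hn : 0 < n) (hm : 0 < m)
    (x : Fin m → (Fin n → ℝ)) (P : Fin m → Matrix (Fin n) (Fin n) ℝ)
    (hP : ∀ i, (P i).PosDef)
    (lam : Fin m → ℝ) (hlam : ∀ i, 0 ≤ lam i) (hlampos : 0 < ∑ i, lam i)
    (hex : ∃ (P₀ : Matrix (Fin n) (Fin n) ℝ) (xt : Fin n → ℝ),
      P₀.PosDef ∧ (sdpBlockN x P P₀ xt lam).PosSemidef) :
    (decoupledBlockM x P lam).PosSemidef :=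
  coupled_implies_decoupled_general n m x P lam hex
end

section
/- (Correctness of the decoupled SDP relaxation ellipsoid) Let λ₁, …, λₘ ≥ 0 with Σ_{i=1}^m λᵢ > 0, and suppose the (n+1)×(n+1) block matrix M(λ) is positive semidefinite. Define P₀ = (Σ_{i=1}^m λᵢPᵢ⁻¹)⁻¹ and x₀ = P₀ Σ_{i=1}^m λᵢPᵢ⁻¹xᵢ. Then F ⊆ E(x₀, P₀), i.e., every x ∈ ℝⁿ satisfying (x−xᵢ)ᵀPᵢ⁻¹(x−xᵢ) ≤ 1 for all i = 1, …, m also satisfies (x−x₀)ᵀP₀⁻¹(x−x₀) ≤ 1. -/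
/-! Write `A = Σ λᵢ Pᵢ⁻¹`, `b = Σ λᵢ Pᵢ⁻¹ xᵢ` and `c = 1 - Σ λᵢ + Σ λᵢ xᵢᵀPᵢ⁻¹xᵢ`, so that
`M(λ) = [[c, bᵀ], [b, A]]` and its quadratic form at `(1, -z)` is `Φ(z) = c - 2 zᵀb + zᵀAz`.
Summing the constraints of `F` with weights `λᵢ` gives `Φ(y) ≤ 1` for `y ∈ F`. As `A` is
positive definite and `A x₀ = b`, completing the square gives `(y - x₀)ᵀA(y - x₀) = Φ(y) - Φ(x₀)`,
and `Φ(x₀) ≥ 0` because `M(λ)` is positive semidefinite. -/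

open Matrix

namespace Matrix

theorem posDef_sum_smul_s7 {ι κ : Type*} [Fintype κ] {c : κ → ℝ} {A : κ → Matrix ι ι ℝ}
    (hc : ∀ k, 0 ≤ c k) (hsum : 0 < ∑ k, c k) (hA : ∀ k, (A k).PosDef) :
    (∑ k, c k • A k).PosDef := by
  classical
  obtain ⟨j, -, hj⟩ := Finset.exists_lt_of_sum_lt (f := fun _ => (0 : ℝ)) (by simpa using hsum)
  rw [← Finset.add_sum_erase _ _ (Finset.mem_univ j)]
  exact ((hA j).smul hj).add_posSemidef
    (posSemidef_sum _ fun k _ => (hA k).posSemidef.smul (hc k))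

variable {ι R : Type*} [Fintype ι]

theorem sub_dotProduct_mulVec_sub [CommRing R] {A : Matrix ι ι R} (hA : A.IsSymm)
    (z w : ι → R) :
    (z - w) ⬝ᵥ (A *ᵥ (z - w)) = z ⬝ᵥ (A *ᵥ z) - 2 * (z ⬝ᵥ (A *ᵥ w)) + w ⬝ᵥ (A *ᵥ w) := by
  have hswap : w ⬝ᵥ (A *ᵥ z) = z ⬝ᵥ (A *ᵥ w) := by
    rw [dotProduct_mulVec, ← mulVec_transpose, hA.eq, dotProduct_comm]
  simp only [mulVec_sub, sub_dotProduct, dotProduct_sub, hswap]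
  ring

theorem sumElim_dotProduct_fromBlocks_mulVec [CommRing R] (c : R) (b : ι → R)
    (A : Matrix ι ι R) (z : ι → R) :
    let v : Unit ⊕ ι → R := Sum.elim 1 (-z)
    v ⬝ᵥ (fromBlocks (of fun _ _ => c) (replicateRow Unit b) (replicateCol Unit b) A *ᵥ v) =
      c - 2 * (z ⬝ᵥ b) + z ⬝ᵥ (A *ᵥ z) := by
  have hcol : replicateCol Unit b *ᵥ 1 = b := by ext; simp [mulVec, dotProduct]
  have hcorner : (of fun _ _ => c : Matrix Unit Unit R) *ᵥ 1 = fun _ => c := by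
    ext; simp [mulVec, dotProduct]
  simp only [fromBlocks_mulVec, Sum.elim_comp_inl, Sum.elim_comp_inr, hcorner, hcol, mulVec_neg,
    replicateRow_mulVec_eq_const, sumElim_dotProduct_sumElim, dotProduct_add, dotProduct_pUnit,
    Pi.one_apply, one_mul, dotProduct_neg, neg_dotProduct, Function.const_apply,
    dotProduct_comm z b, neg_neg]
  ring

theorem sum_mul_sub_dotProduct_mulVec_sub [CommRing R] {κ : Type*} [Fintype κ]
    {Q : κ → Matrix ι ι R} (hQ : ∀ k, (Q k).IsSymm) (c : κ → R) (y : ι → R) (x : κ → ι → R) :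
    ∑ k, c k * ((y - x k) ⬝ᵥ (Q k *ᵥ (y - x k))) =
      y ⬝ᵥ ((∑ k, c k • Q k) *ᵥ y) - 2 * (y ⬝ᵥ ∑ k, c k • (Q k *ᵥ x k)) +
        ∑ k, c k * (x k ⬝ᵥ (Q k *ᵥ x k)) := by
  simp only [sub_dotProduct_mulVec_sub (hQ _), sum_mulVec, smul_mulVec, dotProduct_sum,
    dotProduct_smul, smul_eq_mul, mul_add, mul_sub, Finset.sum_add_distrib,
    Finset.sum_sub_distrib, Finset.mul_sum]
  ring_nf

end Matrix

theorem decoupled_sdp_ellipsoid_contains_intersection_general (n m : ℕ)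
    (x : Fin m → (Fin n → ℝ)) (P : Fin m → Matrix (Fin n) (Fin n) ℝ)
    (hP : ∀ i, (P i).PosDef)
    (lam : Fin m → ℝ) (hlam : ∀ i, 0 ≤ lam i) (hlampos : 0 < ∑ i, lam i)
    (hM : (decoupledBlockM x P lam).PosSemidef)
    (P₀ : Matrix (Fin n) (Fin n) ℝ) (hP₀ : P₀ = (∑ i, lam i • (P i)⁻¹)⁻¹)
    (x₀ : Fin n → ℝ) (hx₀ : x₀ = P₀ *ᵥ (∑ i, lam i • ((P i)⁻¹ *ᵥ x i))) :
    ∀ y : Fin n → ℝ, (∀ i, (y - x i) ⬝ᵥ ((P i)⁻¹ *ᵥ (y - x i)) ≤ 1) →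
      (y - x₀) ⬝ᵥ (P₀⁻¹ *ᵥ (y - x₀)) ≤ 1 := by
  intro y hy
  have hA : (∑ i, lam i • (P i)⁻¹).PosDef := posDef_sum_smul_s7 hlam hlampos fun i => (hP i).inv
  have hdet := hA.det_pos.ne'.isUnit
  have hAx₀ : (∑ i, lam i • (P i)⁻¹) *ᵥ x₀ = ∑ i, lam i • ((P i)⁻¹ *ᵥ x i) := by
    rw [hx₀, hP₀, mulVec_mulVec, mul_nonsing_inv _ hdet, one_mulVec]
  have hMx₀ := hM.dotProduct_mulVec_nonneg (Sum.elim 1 (-x₀))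
  rw [star_trivial, decoupledBlockM, sumElim_dotProduct_fromBlocks_mulVec, hAx₀] at hMx₀
  have hweighted : ∑ i, lam i * ((y - x i) ⬝ᵥ ((P i)⁻¹ *ᵥ (y - x i))) ≤ ∑ i, lam i :=
    Finset.sum_le_sum fun i _ => mul_le_of_le_one_right (hlam i) (hy i)
  rw [sum_mul_sub_dotProduct_mulVec_sub
    (fun i => isHermitian_iff_isSymm.mp (hP i).inv.isHermitian)] at hweighted
  rw [hP₀, nonsing_inv_nonsing_inv _ hdet,
    sub_dotProduct_mulVec_sub (isHermitian_iff_isSymm.mp hA.isHermitian), hAx₀]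
  linarith

/-- (Correctness of the decoupled SDP relaxation ellipsoid) If `M(λ)` is positive semidefinite,
`P₀ = (Σᵢ λᵢPᵢ⁻¹)⁻¹` and `x₀ = P₀ Σᵢ λᵢPᵢ⁻¹xᵢ`, then every point of the intersection
`F = ⋂ᵢ E(xᵢ, Pᵢ)` lies in `E(x₀, P₀)`. -/
theorem decoupled_sdp_ellipsoid_contains_intersection (n m : ℕ) (hn : 0 < n) (hm : 0 < m)
    (x : Fin m → (Fin n → ℝ)) (P : Fin m → Matrix (Fin n) (Fin n) ℝ)
    (hP : ∀ i, (P i).PosDef)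
    (lam : Fin m → ℝ) (hlam : ∀ i, 0 ≤ lam i) (hlampos : 0 < ∑ i, lam i)
    (hM : (decoupledBlockM x P lam).PosSemidef)
    (P₀ : Matrix (Fin n) (Fin n) ℝ) (hP₀ : P₀ = (∑ i, lam i • (P i)⁻¹)⁻¹)
    (x₀ : Fin n → ℝ) (hx₀ : x₀ = P₀ *ᵥ (∑ i, lam i • ((P i)⁻¹ *ᵥ x i))) :
    ∀ y : Fin n → ℝ, (∀ i, (y - x i) ⬝ᵥ ((P i)⁻¹ *ᵥ (y - x i)) ≤ 1) →
      (y - x₀) ⬝ᵥ (P₀⁻¹ *ᵥ (y - x₀)) ≤ 1 :=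
  decoupled_sdp_ellipsoid_contains_intersection_general n m x P hP lam hlam hlampos hM P₀ hP₀ x₀ hx₀
end

section
/- (Scalar characterization of the decoupled LMI) Let t = (t₁, …, tₘ) be a weight vector with tᵢ ≥ 0 and Σᵢ tᵢ = 1, let η > 0, and set λᵢ = η tᵢ for i = 1, …, m. Then the (n+1)×(n+1) block matrix M(λ) is positive semidefinite if and only if 1/η ≥ 1 − δ_t, i.e., 1 − η(1 − δ_t) ≥ 0. -/
/-!
With `λ = η t` the lower-right block of `M(λ)` is `η P_t⁻¹`, which is positive definite, so `M(λ)`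
is positive semidefinite iff its (scalar) Schur complement is nonnegative. Writing
`s = Σᵢ tᵢ Pᵢ⁻¹ xᵢ`, that complement is `1 - η + η Σᵢ tᵢ xᵢᵀPᵢ⁻¹xᵢ - η sᵀ P_t s`, and
`sᵀ P_t s = x_tᵀ P_t⁻¹ x_t` because `x_t = P_t s`; hence it equals `1 - η (1 - δ_t)`.
-/

open Matrix

namespace Matrix

theorem posSemidef_unit_iff {M : Matrix Unit Unit ℝ} : M.PosSemidef ↔ 0 ≤ M () () := by
  refine ⟨fun h => h.diag_nonneg, fun hM => ?_⟩
  refine .of_dotProduct_mulVec_nonneg (by ext; simp) fun v => ?_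
  simpa [dotProduct, mulVec, mul_left_comm] using mul_nonneg hM (mul_self_nonneg (v ()))

theorem posSemidef_fromBlocks_replicate_iff {ι : Type*} [Fintype ι] [DecidableEq ι]
    (a : ℝ) (b : ι → ℝ) {D : Matrix ι ι ℝ} (hD : D.PosDef) :
    (fromBlocks (of fun _ _ => a) (replicateRow Unit b) (replicateCol Unit b) D).PosSemidef ↔
      0 ≤ a - b ⬝ᵥ (D⁻¹ *ᵥ b) := by
  have : Invertible D := hD.isUnit.invertible
  have hcol : replicateCol Unit b = (replicateRow Unit b)ᴴ := by
    rw [conjTranspose_replicateRow, star_trivial]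
  rw [hcol, PosDef.fromBlocks₂₂ _ _ hD, ← hcol, Matrix.mul_assoc, ← replicateCol_mulVec,
    replicateRow_mul_replicateCol]
  exact posSemidef_unit_iff

theorem posDef_sum_smul_s8 {ι n : Type*} [Fintype ι] [Fintype n] {t : ι → ℝ} (ht : ∀ i, 0 ≤ t i)
    (hts : 0 < ∑ i, t i) {A : ι → Matrix n n ℝ} (hA : ∀ i, (A i).PosDef) :
    (∑ i, t i • A i).PosDef := by
  classical
  obtain ⟨j, -, hj⟩ :=
    Finset.exists_lt_of_sum_lt (by simpa using hts : ∑ _i : ι, (0 : ℝ) < ∑ i, t i)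
  rw [← Finset.sum_filter_of_ne fun i _ hi => (ht i).lt_of_ne' fun h => hi (by simp [h])]
  exact posDef_sum ⟨j, by simpa using hj⟩ fun i hi => (hA i).smul (Finset.mem_filter.mp hi).2

theorem smul_dotProduct_inv_smul_mulVec_smul {n : Type*} [Fintype n] [DecidableEq n]
    {c : ℝ} (hc : c ≠ 0) (b : n → ℝ) {D : Matrix n n ℝ} (hD : IsUnit D.det) :
    (c • b) ⬝ᵥ ((c • D)⁻¹ *ᵥ (c • b)) = c * (b ⬝ᵥ (D⁻¹ *ᵥ b)) := by
  have : Invertible c := invertibleOfNonzero hc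
  rw [inv_smul D c hD, invOf_eq_inv]
  simp only [smul_mulVec, mulVec_smul, smul_dotProduct, dotProduct_smul, smul_eq_mul]
  field_simp

end Matrix

theorem decoupledBlockM_smul {n m : ℕ} (x : Fin m → (Fin n → ℝ))
    (P : Fin m → Matrix (Fin n) (Fin n) ℝ) (η : ℝ) (t : Fin m → ℝ) :
    decoupledBlockM x P (η • t) =
      fromBlocks (of fun _ _ => 1 - η * ∑ i, t i + η * ∑ i, t i * (x i ⬝ᵥ ((P i)⁻¹ *ᵥ x i)))
        (replicateRow Unit (η • ∑ i, t i • ((P i)⁻¹ *ᵥ x i)))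
        (replicateCol Unit (η • ∑ i, t i • ((P i)⁻¹ *ᵥ x i)))
        (η • ∑ i, t i • (P i)⁻¹) := by
  simp only [decoupledBlockM, Pi.smul_apply, smul_eq_mul, Finset.mul_sum, Finset.smul_sum,
    mul_smul, mul_assoc]

theorem decoupled_LMI_scalar_characterization_general (n m : ℕ)
    (x : Fin m → (Fin n → ℝ)) (P : Fin m → Matrix (Fin n) (Fin n) ℝ)
    (hP : ∀ i, (P i).PosDef)
    (t : Fin m → ℝ) (ht : ∀ i, 0 ≤ t i) (hts : ∑ i, t i = 1)
    (η : ℝ) (hη : 0 < η)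
    (lam : Fin m → ℝ) (hlam : ∀ i, lam i = η * t i)
    (Ptinv : Matrix (Fin n) (Fin n) ℝ) (hPtinv : Ptinv = ∑ i, t i • (P i)⁻¹)
    (xt : Fin n → ℝ) (hxt : xt = Ptinv⁻¹ *ᵥ (∑ i, t i • ((P i)⁻¹ *ᵥ x i)))
    (δ : ℝ) (hδ : δ = (∑ i, t i * (x i ⬝ᵥ ((P i)⁻¹ *ᵥ x i))) - xt ⬝ᵥ (Ptinv *ᵥ xt)) :
    (decoupledBlockM x P lam).PosSemidef ↔ 1 - η * (1 - δ) ≥ 0 := by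
  obtain rfl : lam = η • t := funext hlam
  have hPt : Ptinv.PosDef :=
    hPtinv ▸ posDef_sum_smul_s8 ht (hts ▸ one_pos) fun i => (hP i).inv
  have hdet : IsUnit Ptinv.det := hPt.det_pos.ne'.isUnit
  have hquad : xt ⬝ᵥ (Ptinv *ᵥ xt) =
      (∑ i, t i • ((P i)⁻¹ *ᵥ x i)) ⬝ᵥ (Ptinv⁻¹ *ᵥ ∑ i, t i • ((P i)⁻¹ *ᵥ x i)) := by
    rw [hxt, mulVec_mulVec, mul_nonsing_inv _ hdet, one_mulVec, dotProduct_comm]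
  rw [decoupledBlockM_smul, ← hPtinv, posSemidef_fromBlocks_replicate_iff _ _ (hPt.smul hη),
    smul_dotProduct_inv_smul_mulVec_smul hη.ne' _ hdet, ← hquad, hδ, hts,
    ge_iff_le]
  ring_nf

/-- (Scalar characterization of the decoupled LMI) With weights `tᵢ ≥ 0`, `Σᵢ tᵢ = 1`, `η > 0`
and `λᵢ = η tᵢ`, the matrix `M(λ)` is positive semidefinite if and only if
`1 - η(1 - δ_t) ≥ 0`, where `P_t⁻¹ = Σᵢ tᵢPᵢ⁻¹`, `x_t = P_t Σᵢ tᵢPᵢ⁻¹xᵢ` and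
`δ_t = Σᵢ tᵢ xᵢᵀPᵢ⁻¹xᵢ - x_tᵀP_t⁻¹x_t`. -/
theorem decoupled_LMI_scalar_characterization (n m : ℕ) (hn : 0 < n) (hm : 0 < m)
    (x : Fin m → (Fin n → ℝ)) (P : Fin m → Matrix (Fin n) (Fin n) ℝ)
    (hP : ∀ i, (P i).PosDef)
    (t : Fin m → ℝ) (ht : ∀ i, 0 ≤ t i) (hts : ∑ i, t i = 1)
    (η : ℝ) (hη : 0 < η)
    (lam : Fin m → ℝ) (hlam : ∀ i, lam i = η * t i)
    (Ptinv : Matrix (Fin n) (Fin n) ℝ) (hPtinv : Ptinv = ∑ i, t i • (P i)⁻¹)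
    (xt : Fin n → ℝ) (hxt : xt = Ptinv⁻¹ *ᵥ (∑ i, t i • ((P i)⁻¹ *ᵥ x i)))
    (δ : ℝ) (hδ : δ = (∑ i, t i * (x i ⬝ᵥ ((P i)⁻¹ *ᵥ x i))) - xt ⬝ᵥ (Ptinv *ᵥ xt)) :
    (decoupledBlockM x P lam).PosSemidef ↔ 1 - η * (1 - δ) ≥ 0 :=
  decoupled_LMI_scalar_characterization_general n m x P hP t ht hts η hη lam hlam Ptinv hPtinv xt
    hxt δ hδ
end

section
/- (Nonnegativity of the tightening constant) Let t = (t₁, …, tₘ) be a weight vector with tᵢ ≥ 0 and Σᵢ tᵢ = 1. Then δ_t ≥ 0. -/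
/-! Since `P_t⁻¹ x_t = Σᵢ tᵢ Pᵢ⁻¹ xᵢ`, completing the square gives
`δ_t = Σᵢ tᵢ (xᵢ - x_t)ᵀ Pᵢ⁻¹ (xᵢ - x_t)`, a nonnegative combination of values of positive
definite quadratic forms. Here `P_t⁻¹` is positive definite, hence invertible, because some
`tᵢ` is positive. -/

open Matrix

theorem Matrix.posDef_sum_smul_of_nonneg {ι n : Type*} [Fintype ι] [Fintype n]
    {A : ι → Matrix n n ℝ} (hA : ∀ i, (A i).PosDef) {t : ι → ℝ} (ht : ∀ i, 0 ≤ t i)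
    (hpos : ∃ i, 0 < t i) : (∑ i, t i • A i).PosDef := by
  classical
  rw [← Finset.sum_filter_of_ne fun i _ hi => (ht i).lt_of_ne' fun h => hi (by simp [h])]
  obtain ⟨i₀, hi₀⟩ := hpos
  exact posDef_sum ⟨i₀, by simpa using hi₀⟩ fun i hi => (hA i).smul (Finset.mem_filter.mp hi).2

theorem Matrix.dotProduct_sum_smul_mulVec {ι n R : Type*} [Fintype ι] [Fintype n]
    [CommSemiring R] (A : ι → Matrix n n R) (t : ι → R) (v w : n → R) :
    v ⬝ᵥ ((∑ i, t i • A i) *ᵥ w) = ∑ i, t i * (v ⬝ᵥ (A i *ᵥ w)) := by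
  simp only [sum_mulVec, smul_mulVec, dotProduct_sum, dotProduct_smul, smul_eq_mul]

theorem Matrix.sum_smul_dotProduct_mulVec_sub_eq {ι n R : Type*} [Fintype ι] [Fintype n]
    [CommRing R] {A : ι → Matrix n n R} (hA : ∀ i, (A i).IsSymm) (t : ι → R) (x : ι → n → R)
    {y : n → R} (hy : (∑ i, t i • A i) *ᵥ y = ∑ i, t i • (A i *ᵥ x i)) :
    ∑ i, t i * (x i ⬝ᵥ (A i *ᵥ x i)) - y ⬝ᵥ ((∑ i, t i • A i) *ᵥ y) =
      ∑ i, t i * ((x i - y) ⬝ᵥ (A i *ᵥ (x i - y))) := by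
  have hcross : ∑ i, t i * (y ⬝ᵥ (A i *ᵥ x i)) = y ⬝ᵥ ((∑ i, t i • A i) *ᵥ y) := by
    simp only [hy, dotProduct_sum, dotProduct_smul, smul_eq_mul]
  have hexpand : ∀ i, (x i - y) ⬝ᵥ (A i *ᵥ (x i - y)) =
      x i ⬝ᵥ (A i *ᵥ x i) - 2 * (y ⬝ᵥ (A i *ᵥ x i)) + y ⬝ᵥ (A i *ᵥ y) := by
    intro i
    have hsymm : x i ⬝ᵥ (A i *ᵥ y) = y ⬝ᵥ (A i *ᵥ x i) := by
      rw [← dotProduct_transpose_mulVec, (hA i).eq]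
    rw [mulVec_sub, sub_dotProduct, dotProduct_sub, dotProduct_sub, hsymm]
    ring
  simp only [hexpand, mul_add, mul_sub, Finset.sum_add_distrib, Finset.sum_sub_distrib,
    mul_left_comm _ (2 : R), ← Finset.mul_sum, hcross, ← dotProduct_sum_smul_mulVec]
  ring

theorem tightening_constant_nonneg_general (n m : ℕ)
    (x : Fin m → (Fin n → ℝ)) (P : Fin m → Matrix (Fin n) (Fin n) ℝ)
    (hP : ∀ i, (P i).PosDef)
    (t : Fin m → ℝ) (ht : ∀ i, 0 ≤ t i) (hts : ∑ i, t i = 1)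
    (Ptinv : Matrix (Fin n) (Fin n) ℝ) (hPtinv : Ptinv = ∑ i, t i • (P i)⁻¹)
    (xt : Fin n → ℝ) (hxt : xt = Ptinv⁻¹ *ᵥ (∑ i, t i • ((P i)⁻¹ *ᵥ x i)))
    (δ : ℝ) (hδ : δ = (∑ i, t i * (x i ⬝ᵥ ((P i)⁻¹ *ᵥ x i))) - xt ⬝ᵥ (Ptinv *ᵥ xt)) :
    0 ≤ δ := by
  have hPinv : ∀ i, (P i)⁻¹.PosDef := fun i => (hP i).inv
  obtain ⟨i₀, -, hi₀⟩ : ∃ i ∈ Finset.univ, (0 : ℝ) < t i :=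
    Finset.exists_lt_of_sum_lt (by simp [hts])
  have hPt : Ptinv.PosDef := hPtinv ▸ posDef_sum_smul_of_nonneg hPinv ht ⟨i₀, hi₀⟩
  have hsolve : Ptinv *ᵥ xt = ∑ i, t i • ((P i)⁻¹ *ᵥ x i) := by
    rw [hxt, mulVec_mulVec, mul_nonsing_inv _ hPt.det_pos.ne'.isUnit, one_mulVec]
  subst hPtinv hδ
  have hsymm i : ((P i)⁻¹).IsSymm := isHermitian_iff_isSymm.mp (hPinv i).isHermitian
  rw [sum_smul_dotProduct_mulVec_sub_eq hsymm t x hsolve]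
  exact Finset.sum_nonneg fun i _ =>
    mul_nonneg (ht i) (by simpa using (hPinv i).posSemidef.dotProduct_mulVec_nonneg (x i - xt))

/-- (Nonnegativity of the tightening constant) For weights `tᵢ ≥ 0` with `Σᵢ tᵢ = 1`,
`δ_t = Σᵢ tᵢ xᵢᵀPᵢ⁻¹xᵢ - x_tᵀP_t⁻¹x_t ≥ 0`, where `P_t⁻¹ = Σᵢ tᵢPᵢ⁻¹` and
`x_t = P_t Σᵢ tᵢPᵢ⁻¹xᵢ`. -/
theorem tightening_constant_nonneg (n m : ℕ) (hn : 0 < n) (hm : 0 < m)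
    (x : Fin m → (Fin n → ℝ)) (P : Fin m → Matrix (Fin n) (Fin n) ℝ)
    (hP : ∀ i, (P i).PosDef)
    (t : Fin m → ℝ) (ht : ∀ i, 0 ≤ t i) (hts : ∑ i, t i = 1)
    (Ptinv : Matrix (Fin n) (Fin n) ℝ) (hPtinv : Ptinv = ∑ i, t i • (P i)⁻¹)
    (xt : Fin n → ℝ) (hxt : xt = Ptinv⁻¹ *ᵥ (∑ i, t i • ((P i)⁻¹ *ᵥ x i)))
    (δ : ℝ) (hδ : δ = (∑ i, t i * (x i ⬝ᵥ ((P i)⁻¹ *ᵥ x i))) - xt ⬝ᵥ (Ptinv *ᵥ xt)) :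
    0 ≤ δ :=
  tightening_constant_nonneg_general n m x P hP t ht hts Ptinv hPtinv xt hxt δ hδ
end

section
/- (Bounding ellipsoid parameters are feasible for the decoupled SDP) Let t = (t₁, …, tₘ) be a weight vector with tᵢ ≥ 0 and Σᵢ tᵢ = 1, and suppose δ_t < 1. Define λᵢ = tᵢ/(1−δ_t) for i = 1, …, m. Then λᵢ ≥ 0, the (n+1)×(n+1) block matrix M(λ) is positive semidefinite, and moreover (Σ_{i=1}^m λᵢ Pᵢ⁻¹)⁻¹ = (1−δ_t)P_t and (Σ_{i=1}^m λᵢ Pᵢ⁻¹)⁻¹ (Σ_{i=1}^m λᵢ Pᵢ⁻¹ xᵢ) = x_t; that is, the decoupled-SDP ellipsoid associated with λ coincides with the bounding ellipsoid E(x_t, (1−δ_t)P_t). -/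
/-!
Put `s = 1 - δ_t > 0`. Since `λ = t / s`, both `Σ λᵢPᵢ⁻¹ = s⁻¹ P_t⁻¹` and `Σ λᵢPᵢ⁻¹xᵢ = s⁻¹ P_t⁻¹ x_t`
are rescalings of the bounding-ellipsoid data, which gives the two identities. Positive
semidefiniteness of `M(λ)` reduces, via the Schur complement of its positive definite lower-right
block, to the scalar inequality `0 ≤ 1 - s⁻¹ + s⁻¹ (Σ tᵢxᵢᵀPᵢ⁻¹xᵢ - x_tᵀP_t⁻¹x_t) = 1 - s⁻¹ (1 - δ_t)`,
which holds with equality.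
-/

open Matrix

theorem Finset.sum_div_smul {ι 𝕜 M : Type*} [Field 𝕜] [AddCommMonoid M] [Module 𝕜 M]
    (s : Finset ι) (t : ι → 𝕜) (c : 𝕜) (A : ι → M) :
    ∑ i ∈ s, (t i / c) • A i = c⁻¹ • ∑ i ∈ s, t i • A i := by
  simp only [Finset.smul_sum, smul_smul, div_eq_inv_mul]

theorem Matrix.PosDef.sum_smul {ι n : Type*} [Fintype ι] [Fintype n] {A : ι → Matrix n n ℝ}
    (hA : ∀ i, (A i).PosDef) {t : ι → ℝ} (ht : ∀ i, 0 ≤ t i) (hts : 0 < ∑ i, t i) :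
    (∑ i, t i • A i).PosDef := by
  classical
  obtain ⟨i₀, -, hi₀⟩ : ∃ i ∈ Finset.univ, (0 : ℝ) < t i :=
    Finset.exists_lt_of_sum_lt (by simpa using hts)
  rw [← Finset.add_sum_erase _ _ (Finset.mem_univ i₀)]
  exact ((hA i₀).smul hi₀).add_posSemidef
    (posSemidef_sum _ fun i _ => (hA i).posSemidef.smul (ht i))

theorem Matrix.posSemidef_unit_iff_s13 {c : ℝ} : (of fun _ _ : Unit => c).PosSemidef ↔ 0 ≤ c := by
  rw [show (of fun _ _ : Unit => c) = diagonal fun _ => c by ext ⟨⟩ ⟨⟩; rfl,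
    posSemidef_diagonal_iff]
  exact ⟨fun h => h (), fun h _ => h⟩

theorem Matrix.posSemidef_fromBlocks_replicate_iff_s13 {n : Type*} [Fintype n] [DecidableEq n]
    {D : Matrix n n ℝ} (hD : D.PosDef) (a : ℝ) (v : n → ℝ) :
    (fromBlocks (of fun _ _ : Unit => a) (replicateRow Unit v) (replicateCol Unit v) D).PosSemidef
      ↔ 0 ≤ a - v ⬝ᵥ (D⁻¹ *ᵥ v) := by
  have : Invertible D := invertibleOfIsUnitDet _ hD.det_pos.ne'.isUnit
  have hcol : replicateCol Unit v = (replicateRow Unit v)ᴴ := by simp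
  rw [hcol, PosDef.fromBlocks₂₂ _ _ hD, ← hcol, Matrix.mul_assoc, ← replicateCol_mulVec,
    replicateRow_mul_replicateCol, ← posSemidef_unit_iff_s13]
  rfl

theorem bounding_ellipsoid_feasible_for_decoupled_sdp_general (n m : ℕ)
    (x : Fin m → (Fin n → ℝ)) (P : Fin m → Matrix (Fin n) (Fin n) ℝ)
    (hP : ∀ i, (P i).PosDef)
    (t : Fin m → ℝ) (ht : ∀ i, 0 ≤ t i) (hts : ∑ i, t i = 1)
    (Ptinv : Matrix (Fin n) (Fin n) ℝ) (hPtinv : Ptinv = ∑ i, t i • (P i)⁻¹)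
    (xt : Fin n → ℝ) (hxt : xt = Ptinv⁻¹ *ᵥ (∑ i, t i • ((P i)⁻¹ *ᵥ x i)))
    (δ : ℝ) (hδ : δ = (∑ i, t i * (x i ⬝ᵥ ((P i)⁻¹ *ᵥ x i))) - xt ⬝ᵥ (Ptinv *ᵥ xt))
    (hδ1 : δ < 1)
    (lam : Fin m → ℝ) (hlam : ∀ i, lam i = t i / (1 - δ)) :
    (∀ i, 0 ≤ lam i) ∧
      (decoupledBlockM x P lam).PosSemidef ∧
      (∑ i, lam i • (P i)⁻¹)⁻¹ = (1 - δ) • Ptinv⁻¹ ∧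
      (∑ i, lam i • (P i)⁻¹)⁻¹ *ᵥ (∑ i, lam i • ((P i)⁻¹ *ᵥ x i)) = xt := by
  obtain rfl : lam = fun i => t i / (1 - δ) := funext hlam
  have hs : 0 < 1 - δ := sub_pos.mpr hδ1
  have hPt : Ptinv.PosDef := hPtinv ▸ PosDef.sum_smul (fun i => (hP i).inv) ht (hts ▸ one_pos)
  have hdet : IsUnit Ptinv.det := hPt.det_pos.ne'.isUnit
  have hD : ∑ i, (t i / (1 - δ)) • (P i)⁻¹ = (1 - δ)⁻¹ • Ptinv := by
    rw [Finset.sum_div_smul, hPtinv]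
  have hv : ∑ i, (t i / (1 - δ)) • ((P i)⁻¹ *ᵥ x i) = (1 - δ)⁻¹ • (Ptinv *ᵥ xt) := by
    rw [Finset.sum_div_smul, hxt, mulVec_mulVec, mul_nonsing_inv _ hdet, one_mulVec]
  have hinv : (∑ i, (t i / (1 - δ)) • (P i)⁻¹)⁻¹ = (1 - δ) • Ptinv⁻¹ := by
    rw [hD]
    refine inv_eq_right_inv ?_
    rw [Matrix.smul_mul, Matrix.mul_smul, smul_smul, inv_mul_cancel₀ hs.ne',
      mul_nonsing_inv _ hdet, one_smul]
  have hcenter : (∑ i, (t i / (1 - δ)) • (P i)⁻¹)⁻¹ *ᵥ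
      (∑ i, (t i / (1 - δ)) • ((P i)⁻¹ *ᵥ x i)) = xt := by
    rw [hinv, hv, smul_mulVec, mulVec_smul, smul_smul, mul_inv_cancel₀ hs.ne', one_smul,
      mulVec_mulVec, nonsing_inv_mul _ hdet, one_mulVec]
  refine ⟨fun i => div_nonneg (ht i) hs.le, ?_, hinv, hcenter⟩
  rw [decoupledBlockM, posSemidef_fromBlocks_replicate_iff_s13 (hD ▸ hPt.smul (inv_pos.mpr hs)),
    hcenter, hv, ← Finset.sum_div, hts]
  simp only [div_eq_inv_mul _ (1 - δ), mul_assoc, ← Finset.mul_sum, smul_dotProduct, smul_eq_mul,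
    dotProduct_comm (Ptinv *ᵥ xt)]
  field_simp
  linarith

/-- (Bounding ellipsoid parameters are feasible for the decoupled SDP) If `δ_t < 1` and
`λᵢ = tᵢ/(1-δ_t)`, then `λᵢ ≥ 0`, `M(λ)` is positive semidefinite, and the decoupled-SDP
ellipsoid associated with `λ` coincides with the bounding ellipsoid `E(x_t, (1-δ_t)P_t)`:
`(Σᵢ λᵢPᵢ⁻¹)⁻¹ = (1-δ_t)P_t` and `(Σᵢ λᵢPᵢ⁻¹)⁻¹ (Σᵢ λᵢPᵢ⁻¹xᵢ) = x_t`. -/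
theorem bounding_ellipsoid_feasible_for_decoupled_sdp (n m : ℕ) (hn : 0 < n) (hm : 0 < m)
    (x : Fin m → (Fin n → ℝ)) (P : Fin m → Matrix (Fin n) (Fin n) ℝ)
    (hP : ∀ i, (P i).PosDef)
    (t : Fin m → ℝ) (ht : ∀ i, 0 ≤ t i) (hts : ∑ i, t i = 1)
    (Ptinv : Matrix (Fin n) (Fin n) ℝ) (hPtinv : Ptinv = ∑ i, t i • (P i)⁻¹)
    (xt : Fin n → ℝ) (hxt : xt = Ptinv⁻¹ *ᵥ (∑ i, t i • ((P i)⁻¹ *ᵥ x i)))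
    (δ : ℝ) (hδ : δ = (∑ i, t i * (x i ⬝ᵥ ((P i)⁻¹ *ᵥ x i))) - xt ⬝ᵥ (Ptinv *ᵥ xt))
    (hδ1 : δ < 1)
    (lam : Fin m → ℝ) (hlam : ∀ i, lam i = t i / (1 - δ)) :
    (∀ i, 0 ≤ lam i) ∧
      (decoupledBlockM x P lam).PosSemidef ∧
      (∑ i, lam i • (P i)⁻¹)⁻¹ = (1 - δ) • Ptinv⁻¹ ∧
      (∑ i, lam i • (P i)⁻¹)⁻¹ *ᵥ (∑ i, lam i • ((P i)⁻¹ *ᵥ x i)) = xt :=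
  bounding_ellipsoid_feasible_for_decoupled_sdp_general n m x P hP t ht hts Ptinv hPtinv xt hxt δ hδ
    hδ1 lam hlam
end

section
/- (Löwner–John shrinkage) Let n ≥ 1 and let C ⊆ ℝⁿ be a compact convex set with nonempty interior. Suppose c ∈ ℝⁿ and P is a symmetric positive definite n×n matrix such that C ⊆ E(c,P) and E(c,P) has minimum volume among all ellipsoids containing C, i.e., for every c' ∈ ℝⁿ and symmetric positive definite Q with C ⊆ E(c',Q) one has det P ≤ det Q. Then the ellipsoid shrunk by a factor n about its center is contained in C: {c + (1/n)(y − c) : y ∈ E(c,P)} ⊆ C ⊆ E(c,P). -/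
/-!
If a point `z = c + (y - c) / n` of the shrunken ellipsoid were outside `C`, a hyperplane would
separate it from `C`. Normalise its normal `a` by `a ⬝ᵥ P a = 1`: the coordinate
`t = a ⬝ᵥ (x - c)` then ranges over `[-1, 1]` on `E(c, P)`, is at most `1 / n` at `z`, and so is
at most some `m ∈ (-1, 1 / n)` on `C`. The deep-cut ellipsoid of the ellipsoid method contains
`{x ∈ E(c, P) | t ≤ m}`: in the coordinate `t` it is the interval `[-1, 2 √α - 1]` with
`√α = n (1 + m) / (n + 1)`, and parallel to the hyperplane `t = 0` it is `E(c, P)` scaled by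
`√β`, where `β = n² (1 - m²) / (n² - 1)`. Its shape matrix has determinant
`β ^ (n - 1) * α * det P < det P`, contradicting minimality.
-/

open Matrix

namespace Matrix

variable {ι : Type*} [Fintype ι]

theorem IsSymm.mulVec_dotProduct {M : Matrix ι ι ℝ} (hM : M.IsSymm) (u v : ι → ℝ) :
    (M *ᵥ u) ⬝ᵥ v = u ⬝ᵥ (M *ᵥ v) := by
  rw [dotProduct_mulVec, ← vecMul_transpose, hM.eq]

theorem nonempty_of_dotProduct_ne_zero {u v : ι → ℝ} (h : u ⬝ᵥ v ≠ 0) : Nonempty ι := by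
  by_contra hι
  rw [not_nonempty_iff] at hι
  simp at h

variable [DecidableEq ι]

theorem PosSemidef.dotProduct_mulVec_sq_le {M : Matrix ι ι ℝ} (hM : M.PosSemidef) (u v : ι → ℝ) :
    (u ⬝ᵥ (M *ᵥ v)) ^ 2 ≤ (u ⬝ᵥ (M *ᵥ u)) * (v ⬝ᵥ (M *ᵥ v)) := by
  have hsymm : M.IsSymm := hM.isHermitian
  have hsymm' : (toLinearMap₂' ℝ M).IsSymm := ⟨fun x y ↦ by
    rw [RingHom.id_apply, toLinearMap₂'_apply', toLinearMap₂'_apply', ← hsymm.mulVec_dotProduct,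
      dotProduct_comm]⟩
  simpa only [toLinearMap₂'_apply'] using LinearMap.BilinForm.apply_sq_le_of_symm _
    (fun x ↦ by simpa [toLinearMap₂'_apply'] using hM.dotProduct_mulVec_nonneg x) hsymm' u v

theorem PosDef.dotProduct_sq_le {P : Matrix ι ι ℝ} (hP : P.PosDef) (a e : ι → ℝ) :
    (a ⬝ᵥ e) ^ 2 ≤ (a ⬝ᵥ (P *ᵥ a)) * (e ⬝ᵥ (P⁻¹ *ᵥ e)) := by
  have hsymm : P.IsSymm := hP.isHermitian
  have hPa : P⁻¹ *ᵥ (P *ᵥ a) = a := by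
    rw [mulVec_mulVec, nonsing_inv_mul _ hP.det_pos.ne'.isUnit, one_mulVec]
  have hPe : P *ᵥ (P⁻¹ *ᵥ e) = e := by
    rw [mulVec_mulVec, mul_nonsing_inv _ hP.det_pos.ne'.isUnit, one_mulVec]
  have := hP.inv.posSemidef.dotProduct_mulVec_sq_le (P *ᵥ a) e
  rwa [hPa, hsymm.mulVec_dotProduct, hPe, dotProduct_comm (P *ᵥ a)] at this

theorem PosDef.dotProduct_sq_eq_of_unique [Unique ι] {P : Matrix ι ι ℝ} (hP : P.PosDef)
    (a e : ι → ℝ) :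
    (a ⬝ᵥ e) ^ 2 = (a ⬝ᵥ (P *ᵥ a)) * (e ⬝ᵥ (P⁻¹ *ᵥ e)) := by
  have hp : P default default ≠ 0 := (hP.diag_pos).ne'
  simp [dotProduct, mulVec]
  field_simp

end Matrix

section Ellipsoid

variable {ι : Type*} [Fintype ι] [DecidableEq ι]

def ellipsoid (c : ι → ℝ) (P : Matrix ι ι ℝ) : Set (ι → ℝ) :=
  {x | (x - c) ⬝ᵥ (P⁻¹ *ᵥ (x - c)) ≤ 1}

theorem abs_dotProduct_sub_le_one_of_mem_ellipsoid {P : Matrix ι ι ℝ} (hP : P.PosDef)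
    {a c x : ι → ℝ} (ha : a ⬝ᵥ (P *ᵥ a) = 1) (hx : x ∈ ellipsoid c P) :
    |a ⬝ᵥ (x - c)| ≤ 1 := by
  rw [← sq_le_one_iff_abs_le_one]
  calc (a ⬝ᵥ (x - c)) ^ 2 ≤ (a ⬝ᵥ (P *ᵥ a)) * ((x - c) ⬝ᵥ (P⁻¹ *ᵥ (x - c))) :=
        hP.dotProduct_sq_le a (x - c)
    _ ≤ 1 := by rw [ha, one_mul]; exact hx

/-- Inverse shape matrix of the ellipsoid with squared half-width `α` in the coordinate `a ⬝ᵥ x`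
whose section by the hyperplane `a ⬝ᵥ x = 0` is that of `E(0, β • P)`. -/
noncomputable def cutForm (P : Matrix ι ι ℝ) (a : ι → ℝ) (α β : ℝ) : Matrix ι ι ℝ :=
  β⁻¹ • P⁻¹ + (α⁻¹ - β⁻¹) • vecMulVec a a

variable {P : Matrix ι ι ℝ} {a : ι → ℝ} {α β : ℝ}

theorem posDef_cutForm (hP : P.PosDef) (hα : 0 < α) (hαβ : α ≤ β) :
    (cutForm P a α β).PosDef :=
  (hP.inv.smul (inv_pos.2 (hα.trans_le hαβ))).add_posSemidef
    ((posSemidef_vecMulVec_self_star a).smul (sub_nonneg.2 (inv_anti₀ hα hαβ)))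

theorem det_cutForm (hP : P.PosDef) (ha : a ⬝ᵥ (P *ᵥ a) = 1) (hα : α ≠ 0) (hβ : β ≠ 0) :
    (cutForm P a α β).det = (β ^ (Fintype.card ι - 1) * α * P.det)⁻¹ := by
  have := nonempty_of_dotProduct_ne_zero (ha.trans_ne one_ne_zero)
  have hPinv : P⁻¹ * P = 1 := nonsing_inv_mul _ hP.det_pos.ne'.isUnit
  have hfactor : cutForm P a α β = (β⁻¹ • P⁻¹) *
      (1 + replicateCol Unit ((β * (α⁻¹ - β⁻¹)) • (P *ᵥ a)) * replicateRow Unit a) := by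
    rw [← vecMulVec_eq, smul_vecMulVec, ← mul_vecMulVec, mul_add, mul_one, Matrix.smul_mul,
      Matrix.mul_smul, ← Matrix.mul_assoc, hPinv, Matrix.one_mul, smul_smul, ← mul_assoc,
      inv_mul_cancel₀ hβ, one_mul, cutForm]
  rw [hfactor, det_mul, det_smul, det_one_add_replicateCol_mul_replicateRow, dotProduct_smul, ha,
    smul_eq_mul, mul_one, det_nonsing_inv, Ring.inverse_eq_inv',
    ← pow_sub_one_mul Fintype.card_pos.ne' β⁻¹, inv_pow]
  field_simp
  ring

theorem dotProduct_cutForm_mulVec (hP : P.PosDef) (ha : a ⬝ᵥ (P *ᵥ a) = 1) (e : ι → ℝ)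
    (σ : ℝ) :
    (e - σ • (P *ᵥ a)) ⬝ᵥ (cutForm P a α β *ᵥ (e - σ • (P *ᵥ a))) =
      (e ⬝ᵥ (P⁻¹ *ᵥ e) - (a ⬝ᵥ e) ^ 2) / β + (a ⬝ᵥ e - σ) ^ 2 / α := by
  have hsymm : P⁻¹.IsSymm := hP.inv.isHermitian
  have hPa : P⁻¹ *ᵥ (P *ᵥ a) = a := by
    rw [mulVec_mulVec, nonsing_inv_mul _ hP.det_pos.ne'.isUnit, one_mulVec]
  have hPe : (P *ᵥ a) ⬝ᵥ (P⁻¹ *ᵥ e) = a ⬝ᵥ e := by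
    rw [← hsymm.mulVec_dotProduct, hPa]
  simp only [cutForm, add_mulVec, smul_mulVec, vecMulVec_mulVec, mulVec_sub, mulVec_smul, hPa,
    sub_dotProduct, dotProduct_sub, dotProduct_add, dotProduct_smul, smul_dotProduct,
    smul_eq_mul, op_smul_eq_smul, hPe, dotProduct_comm e a, dotProduct_comm (P *ᵥ a) a, ha]
  ring

theorem exists_ellipsoid_det_lt_of_forall_cutForm_le (hP : P.PosDef) (ha : a ⬝ᵥ (P *ᵥ a) = 1)
    {c : ι → ℝ} {σ : ℝ} {K : Set (ι → ℝ)} (hα : 0 < α) (hαβ : α ≤ β)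
    (hvol : β ^ (Fintype.card ι - 1) * α < 1)
    (hK : ∀ x ∈ K, ((x - c) ⬝ᵥ (P⁻¹ *ᵥ (x - c)) - (a ⬝ᵥ (x - c)) ^ 2) / β +
      (a ⬝ᵥ (x - c) - σ) ^ 2 / α ≤ 1) :
    ∃ c' Q, Q.PosDef ∧ Q.det < P.det ∧ K ⊆ ellipsoid c' Q := by
  have hR := posDef_cutForm (a := a) hP hα hαβ
  refine ⟨c + σ • (P *ᵥ a), (cutForm P a α β)⁻¹, hR.inv, ?_, fun x hx ↦ ?_⟩
  · rw [det_nonsing_inv, Ring.inverse_eq_inv', det_cutForm hP ha hα.ne' (hα.trans_le hαβ).ne',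
      inv_inv]
    simpa using mul_lt_mul_of_pos_right hvol hP.det_pos
  · have hx' := hK x hx
    rw [← dotProduct_cutForm_mulVec hP ha] at hx'
    rwa [ellipsoid, Set.mem_ofPred_eq, nonsing_inv_nonsing_inv _ hR.det_pos.ne'.isUnit, ← sub_sub]

end Ellipsoid

theorem pow_mul_pow_lt_one_of_mul_sub_one_add {x y : ℝ} {p q : ℕ} (hx : 0 < x) (hy : 0 < y)
    (hx1 : x ≠ 1) (hp : p ≠ 0) (h : p * (x - 1) + q * (y - 1) = 0) : x ^ p * y ^ q < 1 :=
  calc x ^ p * y ^ q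
      < Real.exp (x - 1) ^ p * y ^ q := by
        gcongr
        linarith [Real.add_one_lt_exp (sub_ne_zero.2 hx1)]
    _ ≤ Real.exp (x - 1) ^ p * Real.exp (y - 1) ^ q := by
        gcongr
        linarith [Real.add_one_le_exp (y - 1)]
    _ = 1 := by rw [← Real.exp_nat_mul, ← Real.exp_nat_mul, ← Real.exp_add, h, Real.exp_zero]

section DeepCut

variable {m : ℝ}

theorem deepCut_volume_lt_one {n : ℕ} (hn : 2 ≤ n) (hm : -1 < m) (hmn : n * m < 1) :
    ((n : ℝ) ^ 2 * (1 - m ^ 2) / (n ^ 2 - 1)) ^ (n - 1) * ((n : ℝ) * (1 + m) / (n + 1)) ^ 2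
      < 1 := by
  have hn' : (2 : ℝ) ≤ n := by exact_mod_cast hn
  have hsplit : (n : ℝ) ^ 2 * (1 - m ^ 2) / (n ^ 2 - 1) =
      (n * (1 + m) / (n + 1)) * (n * (1 - m) / (n - 1)) := by
    have : (n : ℝ) - 1 ≠ 0 := by linarith
    have : (n : ℝ) ^ 2 - 1 ≠ 0 := by nlinarith
    field_simp
    ring
  have hA1 : (n : ℝ) * (1 + m) / (n + 1) ≠ 1 := by
    rw [Ne, div_eq_one_iff_eq (by positivity)]
    nlinarith
  -- AM-GM with weights `n + 1`, `n - 1` for the half-width and the second factor of `β`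
  have key := pow_mul_pow_lt_one_of_mul_sub_one_add (p := n + 1) (q := n - 1)
    (x := n * (1 + m) / (n + 1)) (y := n * (1 - m) / (n - 1))
    (div_pos (by nlinarith) (by linarith)) (div_pos (by nlinarith) (by linarith)) hA1
    (Nat.succ_ne_zero n) (by
      have : (n : ℝ) - 1 ≠ 0 := by linarith
      push_cast [Nat.cast_sub (by omega : 1 ≤ n)]
      field_simp
      ring)
  rw [show n + 1 = (n - 1) + 2 by omega, pow_add] at key
  rw [hsplit, mul_pow]
  linarith

theorem deepCut_axis_sq_le {N : ℝ} (hN : 2 ≤ N) (hm : -1 < m) (hmN : N * m < 1) :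
    (N * (1 + m) / (N + 1)) ^ 2 ≤ N ^ 2 * (1 - m ^ 2) / (N ^ 2 - 1) := by
  have hgap : N ^ 2 * (1 - m ^ 2) / (N ^ 2 - 1) - (N * (1 + m) / (N + 1)) ^ 2 =
      2 * N ^ 2 * (1 + m) * (1 - N * m) / ((N + 1) ^ 2 * (N - 1)) := by
    have : N ^ 2 - 1 ≠ 0 := by nlinarith
    have : N - 1 ≠ 0 := by linarith
    field_simp
    ring
  have : 0 ≤ 2 * N ^ 2 * (1 + m) * (1 - N * m) / ((N + 1) ^ 2 * (N - 1)) := by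
    apply div_nonneg
    · apply mul_nonneg (mul_nonneg (by positivity) (by linarith)) (by linarith)
    · apply mul_nonneg (by positivity) (by linarith)
  linarith

theorem deepCut_le_one {N t q : ℝ} (hN : 2 ≤ N) (hm : -1 < m) (hmN : N * m < 1)
    (ht : -1 ≤ t) (htm : t ≤ m) (hq : q ≤ 1) :
    (q - t ^ 2) / (N ^ 2 * (1 - m ^ 2) / (N ^ 2 - 1)) +
      (t - (N * m - 1) / (N + 1)) ^ 2 / (N * (1 + m) / (N + 1)) ^ 2 ≤ 1 := by
  set α := (N * (1 + m) / (N + 1)) ^ 2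
  set β := N ^ 2 * (1 - m ^ 2) / (N ^ 2 - 1)
  have hαβ : α ≤ β := deepCut_axis_sq_le hN hm hmN
  have hα : 0 < α := by
    have : 0 < 1 + m := by linarith
    positivity
  -- the bound is attained at `t = -1` and at `t = m`
  have hid : (1 - t ^ 2) * α + (t - (N * m - 1) / (N + 1)) ^ 2 * β - α * β =
      (β - α) * (t + 1) * (t - m) := by
    have : N ^ 2 - 1 ≠ 0 := by nlinarith
    have : N + 1 ≠ 0 := by linarith
    unfold α β
    field_simp
    ring
  calc _ ≤ (1 - t ^ 2) / β + (t - (N * m - 1) / (N + 1)) ^ 2 / α := by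
        gcongr
        linarith
    _ ≤ 1 := by
        rw [div_add_div _ _ (hα.trans_le hαβ).ne' hα.ne', div_le_one (by nlinarith)]
        nlinarith [mul_nonneg (mul_nonneg (sub_nonneg.2 hαβ) (by linarith : 0 ≤ t + 1))
          (by linarith : 0 ≤ m - t)]

end DeepCut

section Cut

variable {ι : Type*} [Fintype ι] [DecidableEq ι] {P : Matrix ι ι ℝ} {a c : ι → ℝ} {m : ℝ}

theorem exists_ellipsoid_det_lt_of_cut_of_unique [Unique ι] (hP : P.PosDef)
    (ha : a ⬝ᵥ (P *ᵥ a) = 1) (hm : -1 < m) (hm1 : m < 1) :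
    ∃ c' Q, Q.PosDef ∧ Q.det < P.det ∧
      ellipsoid c P ∩ {x | a ⬝ᵥ (x - c) ≤ m} ⊆ ellipsoid c' Q := by
  have hα : 0 < ((1 + m) / 2) ^ 2 := by
    have : 0 < 1 + m := by linarith
    positivity
  refine exists_ellipsoid_det_lt_of_forall_cutForm_le hP ha (c := c) (σ := (m - 1) / 2) hα le_rfl
    (by rw [Fintype.card_unique, pow_zero, one_mul]; nlinarith) fun x ⟨hx, hxm⟩ ↦ ?_
  have hsq := hP.dotProduct_sq_eq_of_unique a (x - c)
  have ht := (abs_le.1 (abs_dotProduct_sub_le_one_of_mem_ellipsoid hP ha hx)).1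
  rw [ha, one_mul] at hsq
  rw [← hsq, sub_self, zero_div, zero_add, div_le_one hα]
  nlinarith [mul_nonneg (sub_nonneg.2 hxm) (by linarith : 0 ≤ 1 + a ⬝ᵥ (x - c))]

theorem exists_ellipsoid_det_lt_of_cut_of_two_le (hι : 2 ≤ Fintype.card ι) (hP : P.PosDef)
    (ha : a ⬝ᵥ (P *ᵥ a) = 1) (hm : -1 < m) (hmι : Fintype.card ι * m < 1) :
    ∃ c' Q, Q.PosDef ∧ Q.det < P.det ∧
      ellipsoid c P ∩ {x | a ⬝ᵥ (x - c) ≤ m} ⊆ ellipsoid c' Q := by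
  have hN : (2 : ℝ) ≤ Fintype.card ι := by exact_mod_cast hι
  have hα : 0 < ((Fintype.card ι : ℝ) * (1 + m) / (Fintype.card ι + 1)) ^ 2 := by
    have : 0 < 1 + m := by linarith
    positivity
  exact exists_ellipsoid_det_lt_of_forall_cutForm_le hP ha (c := c) hα
    (deepCut_axis_sq_le hN hm hmι) (deepCut_volume_lt_one hι hm hmι) fun x ⟨hx, hxm⟩ ↦
      deepCut_le_one hN hm hmι
        (abs_le.1 (abs_dotProduct_sub_le_one_of_mem_ellipsoid hP ha hx)).1 hxm hx

theorem exists_ellipsoid_det_lt_of_cut (hP : P.PosDef) (ha : a ⬝ᵥ (P *ᵥ a) = 1) (hm : -1 < m)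
    (hmι : Fintype.card ι * m < 1) :
    ∃ c' Q, Q.PosDef ∧ Q.det < P.det ∧
      ellipsoid c P ∩ {x | a ⬝ᵥ (x - c) ≤ m} ⊆ ellipsoid c' Q := by
  have := nonempty_of_dotProduct_ne_zero (ha.trans_ne one_ne_zero)
  rcases (Nat.one_le_iff_ne_zero.2 (Fintype.card_ne_zero (α := ι))).eq_or_lt with hι | hι
  · obtain ⟨i, hi⟩ := Fintype.card_eq_one_iff.1 hι.symm
    have : Unique ι := ⟨⟨i⟩, hi⟩
    rw [← hι, Nat.cast_one, one_mul] at hmι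
    exact exists_ellipsoid_det_lt_of_cut_of_unique hP ha hm hmι
  · exact exists_ellipsoid_det_lt_of_cut_of_two_le hι hP ha hm hmι

end Cut

section Separation

variable {ι : Type*} [Fintype ι] [DecidableEq ι] {C : Set (ι → ℝ)} {z : ι → ℝ}

theorem exists_dotProduct_lt_of_notMem (hC : Convex ℝ C) (hCc : IsClosed C) (hz : z ∉ C) :
    ∃ a β, (∀ x ∈ C, a ⬝ᵥ x < β) ∧ β < a ⬝ᵥ z := by
  obtain ⟨f, β, hfC, hfz⟩ := geometric_hahn_banach_closed_point hC hCc hz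
  have hf (x : ι → ℝ) : f x = (dotProductEquiv ℝ ι).symm f ⬝ᵥ x :=
    LinearMap.congr_fun ((dotProductEquiv ℝ ι).apply_symm_apply (f : (ι → ℝ) →ₗ[ℝ] ℝ)).symm x
  exact ⟨_, β, fun x hx ↦ hf x ▸ hfC x hx, hf z ▸ hfz⟩

theorem exists_dotProduct_mulVec_eq_one_of_notMem {P : Matrix ι ι ℝ} (hP : P.PosDef)
    (hC : Convex ℝ C) (hCc : IsClosed C) (hCne : C.Nonempty) (hz : z ∉ C) :
    ∃ a β, a ⬝ᵥ (P *ᵥ a) = 1 ∧ (∀ x ∈ C, a ⬝ᵥ x < β) ∧ β < a ⬝ᵥ z := by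
  obtain ⟨a, β, haC, haz⟩ := exists_dotProduct_lt_of_notMem hC hCc hz
  obtain ⟨x₀, hx₀⟩ := hCne
  have ha : a ≠ 0 := by
    rintro rfl
    linarith [haC x₀ hx₀, zero_dotProduct x₀, zero_dotProduct z]
  have hs : 0 < a ⬝ᵥ (P *ᵥ a) := by simpa using hP.dotProduct_mulVec_pos ha
  set k := (√(a ⬝ᵥ (P *ᵥ a)))⁻¹
  have hk : 0 < k := by positivity
  refine ⟨k • a, k * β, ?_, fun x hx ↦ ?_, ?_⟩
  · rw [mulVec_smul, smul_dotProduct, dotProduct_smul, smul_eq_mul, smul_eq_mul, ← mul_assoc,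
      ← sq, inv_pow, Real.sq_sqrt hs.le, inv_mul_cancel₀ hs.ne']
  · rw [smul_dotProduct, smul_eq_mul]
    exact mul_lt_mul_of_pos_left (haC x hx) hk
  · rw [smul_dotProduct, smul_eq_mul]
    exact mul_lt_mul_of_pos_left haz hk

end Separation

/-- (Löwner–John shrinkage) If `C ⊆ ℝⁿ` is a compact convex set with nonempty interior and
`E(c, P)` is a minimum-volume ellipsoid containing `C` (i.e. `det P ≤ det Q` for every
ellipsoid `E(c', Q)` containing `C`), then the ellipsoid shrunk by a factor `n` about its
center is contained in `C`: `c + (1/n)(E(c,P) - c) ⊆ C ⊆ E(c,P)`. -/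
theorem loewner_john_shrinkage (n : ℕ) (hn : 0 < n)
    (C : Set (Fin n → ℝ)) (hCcompact : IsCompact C) (hCconvex : Convex ℝ C)
    (hCint : (interior C).Nonempty)
    (c : Fin n → ℝ) (P : Matrix (Fin n) (Fin n) ℝ) (hPpd : P.PosDef)
    (hCE : C ⊆ {x : Fin n → ℝ | (x - c) ⬝ᵥ (P⁻¹ *ᵥ (x - c)) ≤ 1})
    (hmin : ∀ (c' : Fin n → ℝ) (Q : Matrix (Fin n) (Fin n) ℝ), Q.PosDef →
      C ⊆ {x : Fin n → ℝ | (x - c') ⬝ᵥ (Q⁻¹ *ᵥ (x - c')) ≤ 1} → P.det ≤ Q.det) :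
    (fun y => c + (1 / (n : ℝ)) • (y - c)) ''
        {x : Fin n → ℝ | (x - c) ⬝ᵥ (P⁻¹ *ᵥ (x - c)) ≤ 1} ⊆ C ∧
      C ⊆ {x : Fin n → ℝ | (x - c) ⬝ᵥ (P⁻¹ *ᵥ (x - c)) ≤ 1} := by
  refine ⟨?_, hCE⟩
  rintro _ ⟨y, hy, rfl⟩
  by_contra hz
  obtain ⟨x₀, hx₀⟩ := hCint.mono interior_subset
  obtain ⟨a, β, ha, haC, haz⟩ := exists_dotProduct_mulVec_eq_one_of_notMem hPpd hCconvex
    hCcompact.isClosed ⟨x₀, hx₀⟩ hz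
  have hm : -1 < β - a ⬝ᵥ c := by
    have := (abs_le.1 (abs_dotProduct_sub_le_one_of_mem_ellipsoid hPpd ha (hCE hx₀))).1
    linarith [haC x₀ hx₀, dotProduct_sub a x₀ c]
  have hmn : Fintype.card (Fin n) * (β - a ⬝ᵥ c) < 1 := by
    have hy₁ := (abs_le.1 (abs_dotProduct_sub_le_one_of_mem_ellipsoid hPpd ha hy)).2
    rw [dotProduct_add, dotProduct_smul, smul_eq_mul] at haz
    rw [Fintype.card_fin, ← lt_div_iff₀' (by exact_mod_cast hn)]
    linarith [mul_le_mul_of_nonneg_left hy₁ (by positivity : (0 : ℝ) ≤ 1 / n)]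
  obtain ⟨c', Q, hQ, hdet, hsub⟩ := exists_ellipsoid_det_lt_of_cut hPpd ha hm hmn
  exact hdet.not_ge (hmin c' Q hQ fun x hx ↦
    hsub ⟨hCE hx, show a ⬝ᵥ (x - c) ≤ _ by linarith [haC x hx, dotProduct_sub a x c]⟩)
end

section
/- (S-procedure characterization of ellipsoid containment) Let x̄₀, xᵢ ∈ ℝⁿ and let P̄₀, Pᵢ be symmetric positive definite n×n matrices. Then E(x̄₀, P̄₀) ⊆ E(xᵢ, Pᵢ) if and only if there exists a scalar τᵢ ≥ 0 such that for all x ∈ ℝⁿ, (x−xᵢ)ᵀPᵢ⁻¹(x−xᵢ) − τᵢ(x−x̄₀)ᵀP̄₀⁻¹(x−x̄₀) ≤ 1 − τᵢ. -/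
/-!
Write `f` and `g` for the two quadratics, so that the containment says `f ≤ 1 → g ≤ 1`. Take `τ`
to be the infimum of `(1 - g y) / (1 - f y)` over the points `y` with `f y < 1`: it is nonnegative
and gives `g - 1 ≤ τ (f - 1)` wherever `f < 1`. Where `f x > 1` one needs the cross inequality
`(g x - 1) / (f x - 1) ≤ (1 - g y) / (1 - f y)` for every such `y`. On the line `t ↦ y + t (x - y)`,
`p = f - 1` is a quadratic `a (t - r) (t - s)` with `a > 0` (as `P̄₀` is positive definite) and
`p 0 < 0 < p 1`, so `r < 0 < s < 1`. The containment gives `q = g - 1 ≤ 0` at `r` and `s`, and the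
identity `(s - r) (q 0 p 1 - q 1 p 0) = a (q r s (1 - s) - q s r (1 - r))` finishes the proof.
-/

open Matrix

lemma exists_roots_neg_pos_of_quadratic {a b c : ℝ} (ha : 0 < a) (hc : c < 0) :
    ∃ r s : ℝ, r < 0 ∧ 0 < s ∧ ∀ t, a * t ^ 2 + b * t + c = a * (t - r) * (t - s) := by
  have hdisc : 0 ≤ b ^ 2 - 4 * a * c := by nlinarith [sq_nonneg b]
  set w := √(b ^ 2 - 4 * a * c)
  have hw : w ^ 2 = b ^ 2 - 4 * a * c := Real.sq_sqrt hdisc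
  have hfactor : ∀ t,
      a * t ^ 2 + b * t + c = a * (t - (-b - w) / (2 * a)) * (t - (-b + w) / (2 * a)) := by
    intro t
    field_simp
    linear_combination hw
  have hrs : (-b - w) / (2 * a) ≤ (-b + w) / (2 * a) :=
    div_le_div_of_nonneg_right (by linarith [Real.sqrt_nonneg (b ^ 2 - 4 * a * c)]) (by linarith)
  have hprod : a * ((-b - w) / (2 * a) * ((-b + w) / (2 * a))) = c := by
    linear_combination -(hfactor 0)
  refine ⟨_, _, ?_, ?_, hfactor⟩
  · by_contra! h
    nlinarith [mul_nonneg h (h.trans hrs)]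
  · by_contra! h
    nlinarith [mul_nonneg (neg_nonneg.2 (hrs.trans h)) (neg_nonneg.2 h)]

lemma cross_le_of_quadratic_sublevel_subset {p q : ℝ → ℝ} {a B b B' : ℝ} (ha : 0 < a)
    (hp : ∀ t, p t = a * t ^ 2 + B * t + p 0) (hq : ∀ t, q t = b * t ^ 2 + B' * t + q 0)
    (hp0 : p 0 < 0) (hp1 : 0 < p 1) (hsub : ∀ t, p t ≤ 0 → q t ≤ 0) :
    q 1 * -p 0 ≤ -q 0 * p 1 := by
  obtain ⟨r, s, hr, hs, hfactor⟩ := exists_roots_neg_pos_of_quadratic (b := B) ha hp0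
  have hp_eq : ∀ t, p t = a * (t - r) * (t - s) := fun t => (hp t).trans (hfactor t)
  have hs1 : s < 1 := by
    by_contra! h
    nlinarith [hp_eq 1, mul_nonneg (mul_nonneg ha.le (by linarith : (0:ℝ) ≤ 1 - r))
      (by linarith : (0:ℝ) ≤ s - 1)]
  have hqr : q r ≤ 0 := hsub r (by simp [hp_eq])
  have hqs : q s ≤ 0 := hsub s (by simp [hp_eq])
  have key : (s - r) * (q 0 * p 1 - q 1 * p 0) =
      a * (q r * (s * (1 - s)) - q s * (r * (1 - r))) := by
    rw [hp_eq 0, hp_eq 1, hq r, hq s, hq 1]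
    ring
  have hrhs : a * (q r * (s * (1 - s)) - q s * (r * (1 - r))) ≤ 0 := by
    have h₁ : q r * (s * (1 - s)) ≤ 0 := mul_nonpos_of_nonpos_of_nonneg hqr (by nlinarith)
    have h₂ : 0 ≤ q s * (r * (1 - r)) := mul_nonneg_of_nonpos_of_nonpos hqs (by nlinarith)
    exact mul_nonpos_of_nonneg_of_nonpos ha.le (by linarith)
  have hdiff : q 0 * p 1 - q 1 * p 0 ≤ 0 :=
    nonpos_of_mul_nonpos_right (key ▸ hrhs) (by linarith)
  linarith

section

variable {ι : Type*} [Fintype ι]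

lemma dotProduct_mulVec_add_smul (Q : Matrix ι ι ℝ) (u d : ι → ℝ) (t : ℝ) :
    (u + t • d) ⬝ᵥ (Q *ᵥ (u + t • d)) =
      d ⬝ᵥ (Q *ᵥ d) * t ^ 2 + (u ⬝ᵥ (Q *ᵥ d) + d ⬝ᵥ (Q *ᵥ u)) * t + u ⬝ᵥ (Q *ᵥ u) := by
  simp only [mulVec_add, mulVec_smul, dotProduct_add, add_dotProduct, dotProduct_smul,
    smul_dotProduct, smul_eq_mul]
  ring

lemma dotProduct_mulVec_along_segment (Q : Matrix ι ι ℝ) (c x y : ι → ℝ) (t : ℝ) :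
    (y + t • (x - y) - c) ⬝ᵥ (Q *ᵥ (y + t • (x - y) - c)) =
      (x - y) ⬝ᵥ (Q *ᵥ (x - y)) * t ^ 2
        + ((y - c) ⬝ᵥ (Q *ᵥ (x - y)) + (x - y) ⬝ᵥ (Q *ᵥ (y - c))) * t
        + (y - c) ⬝ᵥ (Q *ᵥ (y - c)) := by
  rw [← dotProduct_mulVec_add_smul, add_sub_right_comm]

lemma cross_le_of_sublevel_subset {Q R : Matrix ι ι ℝ} (hQ : Q.PosDef) {c c' x y : ι → ℝ}
    (hsub : ∀ z, (z - c) ⬝ᵥ (Q *ᵥ (z - c)) ≤ 1 → (z - c') ⬝ᵥ (R *ᵥ (z - c')) ≤ 1)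
    (hy : (y - c) ⬝ᵥ (Q *ᵥ (y - c)) < 1) (hx : 1 < (x - c) ⬝ᵥ (Q *ᵥ (x - c))) :
    ((x - c') ⬝ᵥ (R *ᵥ (x - c')) - 1) * (1 - (y - c) ⬝ᵥ (Q *ᵥ (y - c))) ≤
      (1 - (y - c') ⬝ᵥ (R *ᵥ (y - c'))) * ((x - c) ⬝ᵥ (Q *ᵥ (x - c)) - 1) := by
  have hxy : x - y ≠ 0 := sub_ne_zero.2 fun h => by subst h; linarith
  have ha : 0 < (x - y) ⬝ᵥ (Q *ᵥ (x - y)) := by simpa using hQ.dotProduct_mulVec_pos hxy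
  have hcross := cross_le_of_quadratic_sublevel_subset
    (p := fun t => (y + t • (x - y) - c) ⬝ᵥ (Q *ᵥ (y + t • (x - y) - c)) - 1)
    (q := fun t => (y + t • (x - y) - c') ⬝ᵥ (R *ᵥ (y + t • (x - y) - c')) - 1)
    (B := (y - c) ⬝ᵥ (Q *ᵥ (x - y)) + (x - y) ⬝ᵥ (Q *ᵥ (y - c)))
    (B' := (y - c') ⬝ᵥ (R *ᵥ (x - y)) + (x - y) ⬝ᵥ (R *ᵥ (y - c'))) ha
    (fun t => by simp only [dotProduct_mulVec_along_segment]; ring)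
    (fun t => by simp only [dotProduct_mulVec_along_segment]; ring)
    (by simpa using hy) (by simpa using hx) (fun t ht => sub_nonpos.2 (hsub _ (sub_nonpos.1 ht)))
  simp only [zero_smul, add_zero, one_smul, add_sub_cancel] at hcross
  linarith

end

lemma exists_nonneg_sub_le_mul_sub_of_cross_le {α : Type*} {f g : α → ℝ} (hslater : ∃ y, f y < 1)
    (hsub : ∀ z, f z ≤ 1 → g z ≤ 1)
    (hcross : ∀ x y, f y < 1 → 1 < f x → (g x - 1) * (1 - f y) ≤ (1 - g y) * (f x - 1)) :
    ∃ τ, 0 ≤ τ ∧ ∀ x, g x - 1 ≤ τ * (f x - 1) := by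
  obtain ⟨y₀, hy₀⟩ := hslater
  have : Nonempty {y // f y < 1} := ⟨⟨y₀, hy₀⟩⟩
  set ratio : {y // f y < 1} → ℝ := fun y => (1 - g y) / (1 - f y)
  have hratio : ∀ y, 0 ≤ ratio y := fun y =>
    div_nonneg (by linarith [hsub y y.2.le]) (by linarith [y.2])
  have hbdd : BddBelow (Set.range ratio) := ⟨0, by rintro _ ⟨y, rfl⟩; exact hratio y⟩
  refine ⟨⨅ y, ratio y, le_ciInf hratio, fun x => ?_⟩
  rcases lt_trichotomy (f x) 1 with hx | hx | hx
  · have hle : ⨅ y, ratio y ≤ (1 - g x) / (1 - f x) := ciInf_le hbdd ⟨x, hx⟩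
    rw [le_div_iff₀ (sub_pos.2 hx)] at hle
    linarith
  · rw [hx, sub_self, mul_zero]
    linarith [hsub x hx.le]
  · have hle : (g x - 1) / (f x - 1) ≤ ⨅ y, ratio y := le_ciInf fun y => by
      rw [div_le_div_iff₀ (sub_pos.2 hx) (sub_pos.2 y.2)]
      exact hcross x y y.2 hx
    rwa [div_le_iff₀ (sub_pos.2 hx)] at hle

theorem ellipsoid_containment_iff_s_procedure_general (n : ℕ)
    (xbar xi : Fin n → ℝ) (Pbar Pi : Matrix (Fin n) (Fin n) ℝ)
    (hPbar : Pbar.PosDef) :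
    ({x : Fin n → ℝ | (x - xbar) ⬝ᵥ (Pbar⁻¹ *ᵥ (x - xbar)) ≤ 1} ⊆
        {x : Fin n → ℝ | (x - xi) ⬝ᵥ (Pi⁻¹ *ᵥ (x - xi)) ≤ 1}) ↔
      ∃ τ : ℝ, 0 ≤ τ ∧ ∀ x : Fin n → ℝ,
        (x - xi) ⬝ᵥ (Pi⁻¹ *ᵥ (x - xi)) - τ * ((x - xbar) ⬝ᵥ (Pbar⁻¹ *ᵥ (x - xbar)))
          ≤ 1 - τ := by
  constructor
  · intro hsub
    obtain ⟨τ, hτ, hmul⟩ := exists_nonneg_sub_le_mul_sub_of_cross_le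
      (f := fun x => (x - xbar) ⬝ᵥ (Pbar⁻¹ *ᵥ (x - xbar)))
      (g := fun x => (x - xi) ⬝ᵥ (Pi⁻¹ *ᵥ (x - xi))) ⟨xbar, by simp⟩ (fun z hz => hsub hz)
      (fun x y hy hx => cross_le_of_sublevel_subset hPbar.inv (fun z hz => hsub hz) hy hx)
    exact ⟨τ, hτ, fun x => by linarith [hmul x]⟩
  · rintro ⟨τ, hτ, hmul⟩ x hx
    rw [Set.mem_ofPred_eq] at hx ⊢
    linarith [hmul x, mul_le_mul_of_nonneg_left hx hτ]

/-- (S-procedure characterization of ellipsoid containment) `E(x̄₀, P̄₀) ⊆ E(xᵢ, Pᵢ)` holds if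
and only if there is `τᵢ ≥ 0` such that for all `x`,
`(x-xᵢ)ᵀPᵢ⁻¹(x-xᵢ) - τᵢ(x-x̄₀)ᵀP̄₀⁻¹(x-x̄₀) ≤ 1 - τᵢ`. -/
theorem ellipsoid_containment_iff_s_procedure (n : ℕ) (hn : 0 < n)
    (xbar xi : Fin n → ℝ) (Pbar Pi : Matrix (Fin n) (Fin n) ℝ)
    (hPbar : Pbar.PosDef) (hPi : Pi.PosDef) :
    ({x : Fin n → ℝ | (x - xbar) ⬝ᵥ (Pbar⁻¹ *ᵥ (x - xbar)) ≤ 1} ⊆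
        {x : Fin n → ℝ | (x - xi) ⬝ᵥ (Pi⁻¹ *ᵥ (x - xi)) ≤ 1}) ↔
      ∃ τ : ℝ, 0 ≤ τ ∧ ∀ x : Fin n → ℝ,
        (x - xi) ⬝ᵥ (Pi⁻¹ *ᵥ (x - xi)) - τ * ((x - xbar) ⬝ᵥ (Pbar⁻¹ *ᵥ (x - xbar)))
          ≤ 1 - τ :=
  ellipsoid_containment_iff_s_procedure_general n xbar xi Pbar Pi hPbar
end
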